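/- arXiv:2103.05725 — 7 statements merged into one kernel-verified Lean document; each statement's English description precedes it below -/
import Mathlib

section
/- For any first countable Hausdorff topological space X, the following are equivalent: (1) X is 2^ω-coverable; (2) every point x ∈ X is contained in a subspace of X homeomorphic to the Cantor space 2^ω; (3) every nonempty open subset of X contains a subspace homeomorphic to 2^ω. -/
open Cardinal Set TopologicalSpace
open Topology Filter

/-- The Cantor space `2^ω`. -/
abbrev CantorSpace : Type := ℕ → Bool

/-- `X` is `Y`-coverable: there is a family of subspaces of `X`, each homeomorphic to `Y`,
whose union is `X`. -/
def Coverable (X Y : Type*) [TopologicalSpace X] [TopologicalSpace Y] : Prop :=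
  ∃ C : Set (Set X), (∀ K ∈ C, Nonempty (K ≃ₜ Y)) ∧ ⋃₀ C = Set.univ

/-- `X` is `Y`-partitionable: there is a partition of `X` into pairwise disjoint subspaces,
each homeomorphic to `Y`. -/
def Partitionable (X Y : Type*) [TopologicalSpace X] [TopologicalSpace Y] : Prop :=
  ∃ P : Set (Set X), (∀ K ∈ P, Nonempty (K ≃ₜ Y)) ∧ P.PairwiseDisjoint id ∧ ⋃₀ P = Set.univ

/-- A packing of copies of `Y` into `X`: a pairwise disjoint family of subspaces of `X`,
each homeomorphic to `Y`. -/
def IsPacking {X : Type*} [TopologicalSpace X] (Y : Type*) [TopologicalSpace Y]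
    (Q : Set (Set X)) : Prop :=
  (∀ K ∈ Q, Nonempty (K ≃ₜ Y)) ∧ Q.PairwiseDisjoint id

lemma not_singleton_homeo {X : Type*} [TopologicalSpace X] (x : X) :
    ¬ Nonempty (({x} : Set X) ≃ₜ CantorSpace) := by
  rintro ⟨e⟩
  have h1 : e.symm (fun _ => false) = e.symm (fun _ => true) := Subsingleton.elim _ _
  have h2 := e.symm.injective h1
  have := congrFun h2 0
  simp at this

lemma range_homeo {X : Type*} [TopologicalSpace X] [T2Space X] {F : CantorSpace → X}
    (hc : Continuous F) (hi : Function.Injective F) :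
    Nonempty ((Set.range F) ≃ₜ CantorSpace) := by
  have hcr : Continuous (fun u => (⟨F u, Set.mem_range_self u⟩ : Set.range F)) :=
    hc.subtype_mk _
  exact ⟨(Continuous.homeoOfEquivCompactToT2 (f := Equiv.ofInjective F hi) hcr).symm⟩

lemma cylinder_open (N : ℕ) (s : CantorSpace) :
    IsOpen {t : CantorSpace | ∀ i < N, t i = s i} := by
  have h : {t : CantorSpace | ∀ i < N, t i = s i} =
      ⋂ i ∈ Finset.range N, (fun t : CantorSpace => t i) ⁻¹' {s i} := by
    ext t; simp [Finset.mem_range]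
  rw [h]
  exact isOpen_biInter_finset fun i _ =>
    (continuous_apply i).isOpen_preimage _ (isOpen_discrete _)

lemma cylinder_subset_of_isOpen {O : Set CantorSpace} (hO : IsOpen O) {c : CantorSpace}
    (hc : c ∈ O) : ∃ N : ℕ, {t : CantorSpace | ∀ i < N, t i = c i} ⊆ O := by
  obtain ⟨I, u, hu, hsub⟩ := isOpen_pi_iff.mp hO c hc
  refine ⟨(I.sup id) + 1, fun t ht => hsub ?_⟩
  intro a ha
  have ha' : a ∈ I := ha
  have : t a = c a := ht a (Nat.lt_succ_of_le (Finset.le_sup (f := id) ha'))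
  rw [this]; exact (hu a ha').2

-- (2) → (3)
lemma two_to_three {X : Type*} [TopologicalSpace X] [T2Space X]
    (h2 : ∀ x : X, ∃ K : Set X, x ∈ K ∧ Nonempty (K ≃ₜ CantorSpace)) :
    ∀ U : Set X, IsOpen U → U.Nonempty →
      ∃ K : Set X, K ⊆ U ∧ Nonempty (K ≃ₜ CantorSpace) := by
  rintro U hU ⟨x, hxU⟩
  obtain ⟨K, hxK, ⟨e⟩⟩ := h2 x
  set c : CantorSpace := e ⟨x, hxK⟩ with hc
  have hS : IsOpen (e '' (Subtype.val ⁻¹' U)) :=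
    e.isOpen_image.mpr (hU.preimage continuous_subtype_val)
  have hcS : c ∈ e '' (Subtype.val ⁻¹' U) := ⟨⟨x, hxK⟩, hxU, rfl⟩
  obtain ⟨N, hN⟩ := cylinder_subset_of_isOpen hS hcS
  classical
  set ext : CantorSpace → CantorSpace := fun u i => if i < N then c i else u (i - N) with hext
  have hext_cyl : ∀ u, ext u ∈ {t : CantorSpace | ∀ i < N, t i = c i} := by
    intro u i hi; simp [hext, hi]
  have hext_inj : Function.Injective ext := by
    intro u v huv
    funext m
    have := congrFun huv (m + N)
    simpa [hext, Nat.add_sub_cancel] using this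
  have hext_cont : Continuous ext := by
    apply continuous_pi
    intro i
    by_cases hi : i < N
    · simpa [hext, hi] using (continuous_const : Continuous fun _ : CantorSpace => c i)
    · simpa [hext, hi] using continuous_apply (i - N)
  set F : CantorSpace → X := fun u => ((e.symm (ext u) : K) : X) with hF
  have hFc : Continuous F :=
    continuous_subtype_val.comp (e.symm.continuous.comp hext_cont)
  have hFi : Function.Injective F := fun u v h =>
    hext_inj (e.symm.injective (Subtype.val_injective h))
  refine ⟨Set.range F, ?_, range_homeo hFc hFi⟩
  rintro y ⟨u, rfl⟩
  have h1 : ext u ∈ e '' (Subtype.val ⁻¹' U) := hN (hext_cyl u)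
  obtain ⟨k, hk, hk2⟩ := h1
  have : e.symm (ext u) = k := by rw [← hk2]; exact e.symm_apply_apply k
  rw [hF]; simp only; rw [this]; exact hk

-- (3) → (2)
lemma three_to_two {X : Type*} [TopologicalSpace X] [T2Space X] [FirstCountableTopology X]
    (h3 : ∀ U : Set X, IsOpen U → U.Nonempty →
      ∃ K : Set X, K ⊆ U ∧ Nonempty (K ≃ₜ CantorSpace)) :
    ∀ x : X, ∃ K : Set X, x ∈ K ∧ Nonempty (K ≃ₜ CantorSpace) := by
  intro x
  classical
  choose! K hKsub hKe using h3
  obtain ⟨U, hU⟩ := (𝓝 x).exists_antitone_basis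
  set U' : ℕ → Set X := fun n => interior (U n) with hU'
  have hU'open : ∀ n, IsOpen (U' n) := fun n => isOpen_interior
  have hU'mem : ∀ n, x ∈ U' n := fun n =>
    mem_interior_iff_mem_nhds.mpr (hU.toHasBasis.mem_of_mem trivial)
  have hU'basis : ∀ W ∈ 𝓝 x, ∃ n, U' n ⊆ W := by
    intro W hW
    obtain ⟨n, -, hn⟩ := hU.toHasBasis.mem_iff.mp hW
    exact ⟨n, interior_subset.trans hn⟩
  set V : ℕ → Set X := fun n =>
    Nat.rec Set.univ (fun n Vn => (Vn ∩ U' n) \ K (Vn \ {x})) n with hV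
  have hVsucc : ∀ n, V (n + 1) = (V n ∩ U' n) \ K (V n \ {x}) := fun n => rfl
  set Kn : ℕ → Set X := fun n => K (V n \ {x}) with hKn
  -- basic properties, by induction
  have key : ∀ n, IsOpen (V n) → x ∈ V n →
      Kn n ⊆ V n \ {x} ∧ Nonempty (Kn n ≃ₜ CantorSpace) ∧ IsClosed (Kn n) := by
    intro n hop hx
    have hVn' : IsOpen (V n \ {x}) := hop.sdiff isClosed_singleton
    have hne : (V n \ {x}).Nonempty := by
      by_contra h
      rw [not_nonempty_iff_eq_empty, diff_eq_empty] at h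
      have hVn : V n = {x} := subset_antisymm h (singleton_subset_iff.mpr hx)
      have h1 := hKsub (V n) hop ⟨x, hx⟩
      have h2 := hKe (V n) hop ⟨x, hx⟩
      obtain ⟨e⟩ := h2
      have hKne : (K (V n)).Nonempty := ⟨(e.symm (fun _ => false) : K (V n)),
        (e.symm (fun _ => false)).2⟩
      obtain ⟨k, hk⟩ := hKne
      have hkx : k = x := by
        have := h1 hk
        rw [hVn] at this
        exact this
      have hKVn : K (V n) = {x} := by
        apply subset_antisymm (hVn ▸ h1)
        rw [singleton_subset_iff]
        exact hkx ▸ hk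
      exact not_singleton_homeo x ⟨hKVn ▸ e⟩
    refine ⟨hKsub _ hVn' hne, hKe _ hVn' hne, ?_⟩
    obtain ⟨e⟩ := hKe _ hVn' hne
    have : CompactSpace (Kn n) := e.symm.compactSpace
    exact (isCompact_iff_compactSpace.mpr this).isClosed
  have main : ∀ n, IsOpen (V n) ∧ x ∈ V n := by
    intro n
    induction n with
    | zero => exact ⟨isOpen_univ, mem_univ x⟩
    | succ n ih =>
        obtain ⟨hop, hx⟩ := ih
        obtain ⟨hsub, he, hcl⟩ := key n hop hx
        constructor
        · rw [hVsucc]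
          exact ((hop.inter (hU'open n)).sdiff hcl)
        · rw [hVsucc]
          exact ⟨⟨hx, hU'mem n⟩, fun hxK => (hsub hxK).2 rfl⟩
  have hKsub' : ∀ n, Kn n ⊆ V n \ {x} := fun n => (key n (main n).1 (main n).2).1
  have hKe' : ∀ n, Nonempty (Kn n ≃ₜ CantorSpace) := fun n => (key n (main n).1 (main n).2).2.1
  have hVmono : ∀ n, V (n + 1) ⊆ V n := by
    intro n y hy
    rw [hVsucc] at hy
    exact hy.1.1
  have hVle : ∀ n m, n ≤ m → V m ⊆ V n := by
    intro n m h
    induction h with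
    | refl => exact subset_rfl
    | @step m' h' ih => exact (hVmono m').trans ih
  have hVU : ∀ n, V (n + 1) ⊆ U' n := by
    intro n y hy
    rw [hVsucc] at hy
    exact hy.1.2
  have hVK : ∀ n, V (n + 1) ⊆ (Kn n)ᶜ := by
    intro n y hy
    rw [hVsucc] at hy
    exact hy.2
  have hdisj : ∀ n m, n < m → ∀ ⦃y⦄, y ∈ Kn m → y ∉ Kn n := by
    intro n m h y hy
    have : y ∈ V m := (hKsub' m hy).1
    exact hVK n (hVle (n + 1) m h this)
  -- pick homeomorphisms for each copy
  have hg : ∀ n, ∃ g : CantorSpace → X,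
      Continuous g ∧ Function.Injective g ∧ ∀ u, g u ∈ Kn n := by
    intro n
    obtain ⟨e⟩ := hKe' n
    exact ⟨fun u => ((e.symm u : Kn n) : X),
      continuous_subtype_val.comp e.symm.continuous,
      fun a b h => e.symm.injective (Subtype.val_injective h),
      fun u => (e.symm u).2⟩
  choose g hgc hgi hgmem using hg
  -- the glued map
  set F : CantorSpace → X := fun s =>
    if h : ∃ n, s n = true then g (Nat.find h) (fun m => s (m + Nat.find h + 1)) else x
    with hFdef
  have hFpos : ∀ s (h : ∃ n, s n = true),
      F s = g (Nat.find h) (fun m => s (m + Nat.find h + 1)) := by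
    intro s h; rw [hFdef]; exact dif_pos h
  have hFneg : ∀ s, ¬(∃ n, s n = true) → F s = x := by
    intro s h; rw [hFdef]; exact dif_neg h
  have hFx : ∀ s (h : ∃ n, s n = true), F s ∈ Kn (Nat.find h) := by
    intro s h; rw [hFpos s h]; exact hgmem _ _
  have hFnotx : ∀ s (h : ∃ n, s n = true), F s ≠ x := by
    intro s h hFx'
    exact (hKsub' (Nat.find h) (hFx s h)).2 (hFx' ▸ rfl)
  have hFi : Function.Injective F := by
    intro s t hst
    by_cases hs : ∃ n, s n = true <;> by_cases ht : ∃ n, t n = true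
    · rcases lt_trichotomy (Nat.find hs) (Nat.find ht) with h | h | h
      · exact absurd (hst ▸ hFx s hs) (hdisj _ _ h (hFx t ht))
      · -- same block: use injectivity of g
        rw [hFpos s hs, hFpos t ht] at hst
        set n := Nat.find hs with hn
        rw [← h] at hst
        have htail := hgi n hst
        funext i
        rcases lt_trichotomy i n with hi | hi | hi
        · have h1 : ¬ s i = true := Nat.find_min hs hi
          have h2 : ¬ t i = true := Nat.find_min ht (h ▸ hi)
          rw [Bool.not_eq_true] at h1 h2
          rw [h1, h2]
        · have h2 : t n = true := by rw [h]; exact Nat.find_spec ht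
          rw [hi]
          exact (Nat.find_spec hs).trans h2.symm
        · have harith : i - n - 1 + n + 1 = i := by omega
          have := congrFun htail (i - n - 1)
          simpa [harith] using this
      · exact absurd (hst ▸ hFx t ht) (fun hmem => hdisj _ _ h (hFx s hs) hmem)
    · exact absurd (hst ▸ hFneg t ht) (hFnotx s hs)
    · exact absurd (hst.symm ▸ hFneg s hs) (hFnotx t ht)
    · funext i
      push_neg at hs ht
      simp only [ne_eq, Bool.not_eq_true] at hs ht
      rw [hs i, ht i]
  have hFc : Continuous F := by
    rw [continuous_iff_continuousAt]
    intro s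
    by_cases hs : ∃ n, s n = true
    · set n := Nat.find hs with hn
      set C : Set CantorSpace := {t | ∀ i < n + 1, t i = s i} with hC
      have hCopen : IsOpen C := cylinder_open (n + 1) s
      have hsC : s ∈ C := fun i _ => rfl
      have heq : Set.EqOn (fun t : CantorSpace => g n (fun m => t (m + n + 1))) F C := by
        intro t htC
        have ht : ∃ m, t m = true := ⟨n, by
          rw [htC n (Nat.lt_succ_self n)]; exact Nat.find_spec hs⟩
        have hfind : Nat.find ht = n := by
          rw [Nat.find_eq_iff]
          refine ⟨by rw [htC n (Nat.lt_succ_self n)]; exact Nat.find_spec hs, ?_⟩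
          intro m hm
          rw [htC m (hm.trans (Nat.lt_succ_self n))]
          exact Nat.find_min hs hm
        show g n (fun m => t (m + n + 1)) = F t
        rw [hFpos t ht, hfind]
      have hGc : Continuous fun t : CantorSpace => g n (fun m => t (m + n + 1)) :=
        (hgc n).comp (continuous_pi fun m => continuous_apply (m + n + 1))
      exact hGc.continuousAt.congr
        (Filter.eventuallyEq_of_mem (hCopen.mem_nhds hsC) heq)
    · have hFs : F s = x := hFneg s hs
      rw [ContinuousAt, hFs, Filter.tendsto_def]
      intro W hW
      obtain ⟨N, hN⟩ := hU'basis W hW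
      have hsfalse : ∀ i, s i = false := by
        push_neg at hs
        intro i; rw [← Bool.not_eq_true]; exact hs i
      refine Filter.mem_of_superset
        ((cylinder_open (N + 1) s).mem_nhds (fun i _ => rfl)) ?_
      intro t htC
      show F t ∈ W
      by_cases ht : ∃ m, t m = true
      · have hmN : N + 1 ≤ Nat.find ht := by
          by_contra hcon
          push_neg at hcon
          have h1 : t (Nat.find ht) = false := by
            rw [htC (Nat.find ht) hcon]; exact hsfalse _
          have h2 : t (Nat.find ht) = true := Nat.find_spec ht
          rw [h1] at h2
          exact Bool.false_ne_true h2
        have hmem : F t ∈ Kn (Nat.find ht) := hFx t ht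
        have hV' : F t ∈ V (Nat.find ht) := (hKsub' _ hmem).1
        exact hN (hVU N (hVle (N + 1) _ hmN hV'))
      · rw [hFneg t ht]
        exact mem_of_mem_nhds hW
  refine ⟨Set.range F, ⟨fun _ => false, ?_⟩, range_homeo hFc hFi⟩
  exact hFneg (fun _ => false) (by simp)

theorem stmt_0 {X : Type*} [TopologicalSpace X] [T2Space X] [FirstCountableTopology X] :
    List.TFAE
      [Coverable X CantorSpace,
       ∀ x : X, ∃ K : Set X, x ∈ K ∧ Nonempty (K ≃ₜ CantorSpace),
       ∀ U : Set X, IsOpen U → U.Nonempty →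
         ∃ K : Set X, K ⊆ U ∧ Nonempty (K ≃ₜ CantorSpace)] := by
  tfae_have 1 → 2 := by
    rintro ⟨C, hC, hUn⟩ x
    have hx : x ∈ ⋃₀ C := hUn ▸ Set.mem_univ x
    obtain ⟨K, hKC, hxK⟩ := hx
    exact ⟨K, hxK, hC K hKC⟩
  tfae_have 2 → 1 := by
    intro h2
    refine ⟨{K | Nonempty (K ≃ₜ CantorSpace)}, fun K hK => hK, ?_⟩
    ext x
    simp only [Set.mem_sUnion, Set.mem_univ, iff_true]
    obtain ⟨K, hx, hK⟩ := h2 x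
    exact ⟨K, hK, hx⟩
  tfae_have 2 → 3 := fun h2 => two_to_three h2
  tfae_have 3 → 2 := fun h3 => three_to_two h3
  tfae_finish
end

section
/- There is a partition P of the Cantor space 2^ω into subspaces each homeomorphic to 2^ω such that every nonempty open subset U of 2^ω contains 𝔠-many members of P (i.e., the set of members of P that are subsets of U has cardinality 𝔠). -/
open Cardinal Set TopologicalSpace

namespace Stmt1Aux

abbrev Idx : Type := ℕ × ℕ × Bool
abbrev XS : Type := Idx → Bool

/-- The set of points agreeing with `r` on `T`. -/
def fixSet (T : Set Idx) (r : XS) : Set XS := {z | ∀ x ∈ T, z x = r x}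

lemma mem_fixSet {T : Set Idx} {r z : XS} : z ∈ fixSet T r ↔ ∀ x ∈ T, z x = r x := Iff.rfl

open Classical in
noncomputable def fixEquiv (T : Set Idx) (r : XS) (e : {x : Idx // x ∉ T} ≃ ℕ) :
    ↥(fixSet T r) ≃ CantorSpace where
  toFun z n := z.1 (e.symm n).1
  invFun g := ⟨fun x => if h : x ∈ T then r x else g (e ⟨x, h⟩), fun x hx => dif_pos hx⟩
  left_inv z := by
    apply Subtype.ext
    funext x
    by_cases h : x ∈ T
    · simp only [dif_pos h]
      exact (z.2 x h).symm
    · simp only [dif_neg h, Subtype.coe_eta, Equiv.symm_apply_apply]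
  right_inv g := by
    funext n
    simp only [dif_neg (e.symm n).2, Subtype.coe_eta, Equiv.apply_symm_apply]

open Classical in
noncomputable def fixHomeo (T : Set Idx) (r : XS) (e : {x : Idx // x ∉ T} ≃ ℕ) :
    ↥(fixSet T r) ≃ₜ CantorSpace :=
  { fixEquiv T r e with
    continuous_toFun := by
      have h : Continuous fun (z : ↥(fixSet T r)) (n : ℕ) => z.1 (e.symm n).1 :=
        continuous_pi fun _ => (continuous_apply _).comp continuous_subtype_val
      exact h
    continuous_invFun := by
      have h : Continuous fun (g : CantorSpace) (x : Idx) =>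
          if h : x ∈ T then r x else g (e ⟨x, h⟩) := by
        apply continuous_pi
        intro x
        by_cases h : x ∈ T
        · simp only [dif_pos h]
          exact continuous_const
        · simp only [dif_neg h]
          exact continuous_apply _
      exact Continuous.subtype_mk h _ }

def Crow (n : ℕ) (r : XS) : Set XS := fixSet {x | x.1 ≤ n} r
def Dset (f : ℕ → ℕ → Bool) : Set XS := fixSet {x | x.2.2 = false} (fun x => f x.1 x.2.1)

/-- The marker set of row `i`. -/
def Mrk (i : ℕ) (z : XS) : Set ℕ := {k | z (i, k, false) = true}

def Valid1 (n : ℕ) (r : XS) : Prop := (∀ i < n, (Mrk i r).Finite) ∧ (Mrk n r).Infinite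
def Valid2 (f : ℕ → ℕ → Bool) : Prop := ∀ i, {k | f i k = true}.Finite

def P0 : Set (Set XS) :=
  {K | (∃ n r, Valid1 n r ∧ K = Crow n r) ∨ (∃ f, Valid2 f ∧ K = Dset f)}

lemma Mrk_eq_of_mem_Crow {n : ℕ} {r z : XS} (hz : z ∈ Crow n r) {i : ℕ} (hi : i ≤ n) :
    Mrk i z = Mrk i r := by
  ext k
  simp only [Mrk, mem_setOf_eq]
  rw [hz (i, k, false) hi]

lemma Mrk_eq_of_mem_Dset {f : ℕ → ℕ → Bool} {z : XS} (hz : z ∈ Dset f) (i : ℕ) :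
    Mrk i z = {k | f i k = true} := by
  ext k
  simp only [Mrk, mem_setOf_eq]
  rw [hz (i, k, false) rfl]

open Classical in
noncomputable def pieceOf (z : XS) : Set XS :=
  if h : ∃ i, (Mrk i z).Infinite then Crow (Nat.find h) z
  else Dset (fun i k => z (i, k, false))

lemma mem_pieceOf (z : XS) : z ∈ pieceOf z := by
  classical
  unfold pieceOf
  split
  · intro x _; rfl
  · rintro ⟨i, k, c⟩ hc
    have hc' : c = false := hc
    subst hc'
    rfl

lemma pieceOf_mem_P0 (z : XS) : pieceOf z ∈ P0 := by
  classical
  unfold pieceOf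
  split
  case isTrue h =>
    exact Or.inl ⟨Nat.find h, z,
      ⟨fun i hi => Set.not_infinite.mp (Nat.find_min h hi), Nat.find_spec h⟩, rfl⟩
  case isFalse h =>
    push_neg at h
    refine Or.inr ⟨_, fun i => ?_, rfl⟩
    have := h i
    exact this

lemma eq_pieceOf_of_mem {K : Set XS} (hK : K ∈ P0) {z : XS} (hz : z ∈ K) : K = pieceOf z := by
  classical
  unfold pieceOf
  rcases hK with ⟨n, r, ⟨hfin, hinf⟩, rfl⟩ | ⟨f, hval, rfl⟩
  · have hMn : (Mrk n z).Infinite := by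
      rw [Mrk_eq_of_mem_Crow hz le_rfl]; exact hinf
    have hex : ∃ i, (Mrk i z).Infinite := ⟨n, hMn⟩
    rw [dif_pos hex]
    have hfind : Nat.find hex = n := by
      rw [Nat.find_eq_iff]
      refine ⟨hMn, fun i hi => ?_⟩
      rw [Set.not_infinite, Mrk_eq_of_mem_Crow hz hi.le]
      exact hfin i hi
    rw [hfind]
    ext w
    constructor
    · intro hw x hx
      rw [hw x hx, ← hz x hx]
    · intro hw x hx
      rw [hw x hx]
      exact hz x hx
  · have hnex : ¬ ∃ i, (Mrk i z).Infinite := by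
      rintro ⟨i, hi⟩
      rw [Mrk_eq_of_mem_Dset hz i] at hi
      exact hi (hval i)
    rw [dif_neg hnex]
    have hf : ∀ i k, f i k = z (i, k, false) := fun i k => (hz (i, k, false) rfl).symm
    ext w
    constructor
    · rintro hw ⟨i, k, c⟩ hc
      have hc' : c = false := hc
      subst hc'
      rw [hw (i, k, false) rfl]
      exact hf i k
    · rintro hw ⟨i, k, c⟩ hc
      have hc' : c = false := hc
      subst hc'
      rw [hw (i, k, false) rfl]
      exact (hf i k).symm

lemma eq_of_mem_inter {A B : Set XS} {z : XS} (hA : A ∈ P0) (hB : B ∈ P0)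
    (hzA : z ∈ A) (hzB : z ∈ B) : A = B :=
  (eq_pieceOf_of_mem hA hzA).trans (eq_pieceOf_of_mem hB hzB).symm

lemma nonempty_of_mem_P0 {K : Set XS} (hK : K ∈ P0) : K.Nonempty := by
  rcases hK with ⟨n, r, _, rfl⟩ | ⟨f, _, rfl⟩
  · exact ⟨r, fun x _ => rfl⟩
  · refine ⟨fun x => bif x.2.2 then false else f x.1 x.2.1, ?_⟩
    rintro ⟨i, k, c⟩ hc
    have hc' : c = false := hc
    subst hc'
    rfl

lemma crow_homeo (n : ℕ) (r : XS) : Nonempty (↥(Crow n r) ≃ₜ CantorSpace) := by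
  haveI : Infinite {x : Idx // x ∉ {x : Idx | x.1 ≤ n}} :=
    Infinite.of_injective (fun m : ℕ => ⟨(n + 1, m, false), by simp⟩)
      (by intro a b hab; simpa using hab)
  obtain ⟨e⟩ := nonempty_equiv_of_countable (α := {x : Idx // x ∉ {x : Idx | x.1 ≤ n}}) (β := ℕ)
  exact ⟨fixHomeo _ _ e⟩

lemma dset_homeo (f : ℕ → ℕ → Bool) : Nonempty (↥(Dset f) ≃ₜ CantorSpace) := by
  haveI : Infinite {x : Idx // x ∉ {x : Idx | x.2.2 = false}} :=
    Infinite.of_injective (fun m : ℕ => ⟨(m, 0, true), by simp⟩)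
      (by intro a b hab; simpa using hab)
  obtain ⟨e⟩ := nonempty_equiv_of_countable
    (α := {x : Idx // x ∉ {x : Idx | x.2.2 = false}}) (β := ℕ)
  exact ⟨fixHomeo _ _ e⟩

lemma homeo_of_mem_P0 {K : Set XS} (hK : K ∈ P0) : Nonempty (↥K ≃ₜ CantorSpace) := by
  rcases hK with ⟨n, r, _, rfl⟩ | ⟨f, _, rfl⟩
  · exact crow_homeo n r
  · exact dset_homeo f

lemma density {V : Set XS} (hV : IsOpen V) (hne : V.Nonempty) :
    ∃ F : CantorSpace → Set XS, Function.Injective F ∧ ∀ g, F g ∈ P0 ∧ F g ⊆ V := by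
  classical
  obtain ⟨v, hv⟩ := hne
  obtain ⟨I, u, hu, hsub⟩ := isOpen_pi_iff.mp hV v hv
  set n := (I.sup fun x => x.1) + 1 with hn
  have hrow : ∀ x ∈ I, x.1 < n := fun x hx => Nat.lt_succ_of_le (Finset.le_sup hx)
  set ρ : CantorSpace → XS := fun g x =>
    if x ∈ I then v x
    else if x.1 = n then (if x.2.2 = true then g x.2.1 else true) else false with hρ
  have hnI : ∀ (k : ℕ) (c : Bool), ((n, k, c) : Idx) ∉ I := by
    intro k c hmem
    exact absurd (hrow _ hmem) (lt_irrefl n)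
  have hval : ∀ (g : CantorSpace) (k : ℕ) (c : Bool),
      ρ g (n, k, c) = if c = true then g k else true := by
    intro g k c
    simp only [hρ]
    rw [if_neg (hnI k c)]
    simp
  refine ⟨fun g => Crow n (ρ g), ?_, ?_⟩
  · intro g g' hgg'
    have hgg2 : Crow n (ρ g) = Crow n (ρ g') := hgg'
    have h1 : ρ g ∈ Crow n (ρ g) := fun x _ => rfl
    rw [hgg2] at h1
    funext k
    have h2 := h1 (n, k, true) (le_refl n)
    rwa [hval g k true, hval g' k true, if_pos rfl, if_pos rfl] at h2
  · intro g
    constructor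
    · refine Or.inl ⟨n, ρ g, ⟨?_, ?_⟩, rfl⟩
      · intro i hi
        apply Set.Finite.subset (I.finite_toSet.image fun x => x.2.1)
        intro k hk
        by_cases hmem : ((i, k, false) : Idx) ∈ I
        · exact ⟨(i, k, false), hmem, rfl⟩
        · exfalso
          have hz : ρ g (i, k, false) = false := by
            simp only [hρ]
            rw [if_neg hmem, if_neg (by omega : ¬ i = n)]
          have hk' : ρ g (i, k, false) = true := hk
          rw [hz] at hk'
          exact Bool.false_ne_true hk'
      · have huniv : Mrk n (ρ g) = Set.univ := by
          ext k
          simp only [Mrk, mem_setOf_eq, mem_univ, iff_true]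
          rw [hval g k false]
          simp
        rw [huniv]
        exact Set.infinite_univ
    · intro z hz
      apply hsub
      rw [Set.mem_pi]
      intro x hx
      have hxI : x ∈ I := hx
      have h1 : z x = ρ g x := hz x (le_of_lt (hrow x hxI))
      have h2 : ρ g x = v x := by
        simp only [hρ]
        rw [if_pos hxI]
      rw [h1, h2]
      exact (hu x hxI).2

end Stmt1Aux

theorem stmt_1 :
    ∃ P : Set (Set CantorSpace),
      (∀ K ∈ P, Nonempty (K ≃ₜ CantorSpace)) ∧ P.PairwiseDisjoint id ∧ ⋃₀ P = Set.univ ∧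
      ∀ U : Set CantorSpace, IsOpen U → U.Nonempty →
        Cardinal.mk {K : Set CantorSpace // K ∈ P ∧ K ⊆ U} = Cardinal.continuum := by
  classical
  obtain ⟨e⟩ := nonempty_equiv_of_countable (α := ℕ) (β := Stmt1Aux.Idx)
  let Φ : CantorSpace ≃ₜ Stmt1Aux.XS :=
    Homeomorph.piCongrLeft (Y := fun _ : Stmt1Aux.Idx => Bool) e
  let Ψ : Stmt1Aux.XS ≃ₜ CantorSpace := Φ.symm
  set P' : Set (Set CantorSpace) := (fun K => Ψ '' K) '' Stmt1Aux.P0 with hP'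
  have key : ∀ K₁ ∈ P', ∀ K₂ ∈ P', ∀ z : CantorSpace, z ∈ K₁ → z ∈ K₂ → K₁ = K₂ := by
    rintro _ ⟨A, hA, rfl⟩ _ ⟨B, hB, rfl⟩ z ⟨a, ha, rfl⟩ ⟨b, hb, hba⟩
    have hab : b = a := Ψ.injective hba
    subst hab
    rw [Stmt1Aux.eq_of_mem_inter hA hB ha hb]
  have hPne : ∀ K ∈ P', K.Nonempty := by
    rintro _ ⟨A, hA, rfl⟩
    exact (Stmt1Aux.nonempty_of_mem_P0 hA).image _
  have hmkC : Cardinal.mk CantorSpace = Cardinal.continuum := by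
    have h1 : Cardinal.mk CantorSpace = Cardinal.mk Bool ^ Cardinal.mk ℕ :=
      (Cardinal.power_def Bool ℕ).symm
    rw [h1, Cardinal.mk_bool, Cardinal.mk_nat, Cardinal.two_power_aleph0]
  refine ⟨P', ?_, ?_, ?_, ?_⟩
  · rintro _ ⟨A, hA, rfl⟩
    obtain ⟨h⟩ := Stmt1Aux.homeo_of_mem_P0 hA
    exact ⟨(Homeomorph.image Ψ A).symm.trans h⟩
  · intro K₁ hK₁ K₂ hK₂ hne
    simp only [Function.onFun, id_eq]
    rw [Set.disjoint_left]
    intro z hz₁ hz₂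
    exact hne (key K₁ hK₁ K₂ hK₂ z hz₁ hz₂)
  · apply Set.eq_univ_of_forall
    intro z
    refine Set.mem_sUnion.mpr ⟨Ψ '' Stmt1Aux.pieceOf (Ψ.symm z),
      ⟨Stmt1Aux.pieceOf (Ψ.symm z), Stmt1Aux.pieceOf_mem_P0 _, rfl⟩, ?_⟩
    exact ⟨Ψ.symm z, Stmt1Aux.mem_pieceOf _, Ψ.apply_symm_apply z⟩
  · intro U hU hUne
    apply le_antisymm
    · have hne' : ∀ K : {K : Set CantorSpace // K ∈ P' ∧ K ⊆ U}, (K.1).Nonempty :=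
        fun K => hPne K.1 K.2.1
      have hinj : Function.Injective
          (fun K : {K : Set CantorSpace // K ∈ P' ∧ K ⊆ U} => (hne' K).some) := by
        intro K₁ K₂ h
        have h' : (hne' K₁).some = (hne' K₂).some := h
        have h₁ := (hne' K₁).some_mem
        have h₂ := (hne' K₂).some_mem
        rw [h'] at h₁
        exact Subtype.ext (key _ K₁.2.1 _ K₂.2.1 _ h₁ h₂)
      exact (Cardinal.mk_le_of_injective hinj).trans_eq hmkC
    · obtain ⟨u₀, hu₀⟩ := hUne
      have hVne : (Ψ ⁻¹' U).Nonempty := ⟨Ψ.symm u₀, by simp [hu₀]⟩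
      obtain ⟨F, hFinj, hF⟩ := Stmt1Aux.density (hU.preimage Ψ.continuous) hVne
      have hinj : Function.Injective (fun g : CantorSpace =>
          (⟨Ψ '' F g, ⟨F g, (hF g).1, rfl⟩, Set.image_subset_iff.mpr (hF g).2⟩ :
            {K : Set CantorSpace // K ∈ P' ∧ K ⊆ U})) := by
        intro g g' h
        have h' : Ψ '' F g = Ψ '' F g' := congrArg Subtype.val h
        exact hFinj (Set.image_injective.mpr Ψ.injective h')
      have hle := Cardinal.mk_le_of_injective hinj
      rwa [hmkC] at hle
end

section
/- For any metrizable space X, the following are equivalent: (1) X is 2^ω-partitionable; (2) there is a partition P of X into copies of 2^ω such that every open U ⊆ X contains |U|-many members of P; (3) there is a packing Q of Cantor spaces into X such that every open U ⊆ X contains |U|-many members of Q; (4) there is a packing Q of Cantor spaces into X such that every nonempty open U ⊆ X meets some member of Q, and if |U| > 𝔠 then U meets |U|-many members of Q; (5) for every open U ⊆ X, there is a packing of Cantor spaces into U of cardinality |U|. -/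
open Cardinal Set TopologicalSpace

open Topology


namespace CantorAux




/-- homeomorphism onto the range, for a continuous injection from a compact space
to a T2 space. -/
noncomputable def homeoRange {C Y : Type*} [TopologicalSpace C] [TopologicalSpace Y]
    [CompactSpace C] [T2Space Y] (f : C → Y) (hf : Continuous f)
    (hinj : Function.Injective f) : C ≃ₜ Set.range f :=
  (hf.isClosedEmbedding hinj).toIsEmbedding.toHomeomorph

lemma homeoRange_apply {C Y : Type*} [TopologicalSpace C] [TopologicalSpace Y]
    [CompactSpace C] [T2Space Y] (f : C → Y) (hf : Continuous f)
    (hinj : Function.Injective f) (x : C) : (homeoRange f hf hinj x : Y) = f x := rfl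

/-- transfer a set along `Subtype.val`. -/
def valImageHomeo {X : Type*} [TopologicalSpace X] {K : Set X} (A : Set ↥K) :
    ↥(Subtype.val '' A) ≃ₜ ↥A where
  toFun z := ⟨⟨z.1, by obtain ⟨w, hw, hv⟩ := z.2; exact hv ▸ w.2⟩, by
    obtain ⟨w, hw, hv⟩ := z.2
    have : (⟨z.1, hv ▸ w.2⟩ : ↥K) = w := Subtype.ext hv.symm
    rw [this]; exact hw⟩
  invFun a := ⟨(a.1 : X), ⟨a.1, a.2, rfl⟩⟩
  left_inv z := rfl
  right_inv a := rfl
  continuous_toFun := by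
    apply Continuous.subtype_mk
    exact Continuous.subtype_mk continuous_subtype_val _
  continuous_invFun := by
    apply Continuous.subtype_mk
    exact continuous_subtype_val.comp continuous_subtype_val

lemma mk_cantor : #CantorSpace = continuum := by
  have : #CantorSpace = 2 ^ aleph0 := by simp [Cardinal.mk_arrow]
  rw [this, Cardinal.two_power_aleph0]

/-- cardinality of a subset homeomorphic to the Cantor space -/
lemma mk_of_homeo {X : Type u} [TopologicalSpace X] {K : Set X}
    (h : Nonempty (↥K ≃ₜ CantorSpace)) : #↥K = continuum := by
  obtain ⟨e⟩ := h
  have h2 := Cardinal.lift_mk_eq'.2 ⟨e.toEquiv⟩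
  rw [mk_cantor] at h2
  have h3 : Cardinal.lift.{0,u} #↥K = #↥K := Cardinal.lift_id'.{0,u} _
  rw [h3, Cardinal.lift_continuum] at h2
  exact h2





/-- prefix-free code of the pair (j, y) -/
def code (j : ℕ) (y : CantorSpace) : CantorSpace := fun k =>
  if k < j then true else if k = j then false else y (k - (j+1))

lemma code_inj {j j' : ℕ} {y y' : CantorSpace} (h : code j y = code j' y') :
    j = j' ∧ y = y' := by
  have hj : j = j' := by
    by_contra hne
    rcases Nat.lt_or_ge j j' with hlt | hge
    · have h1 : code j y j = false := by simp [code]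
      have h2 : code j' y' j = true := by simp [code, hlt]
      rw [h] at h1; rw [h1] at h2; exact Bool.false_ne_true h2
    · have hlt : j' < j := lt_of_le_of_ne hge (Ne.symm hne)
      have h1 : code j' y' j' = false := by simp [code]
      have h2 : code j y j' = true := by simp [code, hlt]
      rw [h] at h2; rw [h1] at h2; exact Bool.false_ne_true h2
  subst hj
  refine ⟨rfl, funext fun k => ?_⟩
  have := congrFun h (j + 1 + k)
  simpa [code, Nat.add_sub_cancel_left, show ¬(j+1+k < j) by omega,
    show ¬(j+1+k = j) by omega, show j+1+k-(j+1) = k by omega] using this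

/-- interleaved tail : code at 4k, data at 4k+2, false elsewhere -/
def tl (c u : CantorSpace) : ℕ → Bool := fun i =>
  if i % 4 = 0 then c (i / 4) else if i % 4 = 2 then u (i / 4) else false

lemma tl_odd {c u : CantorSpace} {i : ℕ} (h : i % 2 = 1) : tl c u i = false := by
  have h4 : i % 4 = 1 ∨ i % 4 = 3 := by omega
  rcases h4 with h4 | h4 <;> simp [tl, h4]

lemma tl_code (c u : CantorSpace) (k : ℕ) : tl c u (4*k) = c k := by
  simp [tl, Nat.mul_mod_right, Nat.mul_div_cancel_left _ (by norm_num : (0:ℕ) < 4)]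

lemma tl_data (c u : CantorSpace) (k : ℕ) : tl c u (4*k+2) = u k := by
  have h1 : (4*k+2) % 4 = 2 := by omega
  have h2 : (4*k+2) / 4 = k := by omega
  simp [tl, h1, h2]

/-- The master embedding family: `E s j y : CantorSpace → CantorSpace` has range inside
the cylinder of `s`, and ranges over distinct `(s, j, y)` are pairwise disjoint. -/
def E (s : List Bool) (j : ℕ) (y : CantorSpace) (u : CantorSpace) : CantorSpace := fun i =>
  if h : i < s.length then s[i]
  else if i ≤ s.length then false
  else if i ≤ 2 * s.length then true
  else if i ≤ 2 * s.length + 2 then false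
  else tl (code j y) u (i - (2 * s.length + 3))

section Eval
variable (s : List Bool) (j : ℕ) (y u : CantorSpace)

lemma E_cyl {i : ℕ} (h : i < s.length) : E s j y u i = s[i] := by simp [E, h]

lemma E_at_n : E s j y u s.length = false := by simp [E]

lemma E_ones {i : ℕ} (h1 : s.length + 1 ≤ i) (h2 : i ≤ 2 * s.length) :
    E s j y u i = true := by
  simp [E, show ¬ i < s.length by omega, show ¬ i ≤ s.length by omega, h2]

lemma E_z1 : E s j y u (2 * s.length + 1) = false := by
  simp [E, show ¬ 2*s.length+1 < s.length by omega, show ¬ 2*s.length+1 ≤ s.length by omega,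
    show ¬ 2*s.length+1 ≤ 2*s.length by omega]

lemma E_z2 : E s j y u (2 * s.length + 2) = false := by
  simp [E, show ¬ 2*s.length+2 < s.length by omega, show ¬ 2*s.length+2 ≤ s.length by omega,
    show ¬ 2*s.length+2 ≤ 2*s.length by omega]

lemma E_tail (i : ℕ) : E s j y u (2 * s.length + 3 + i) = tl (code j y) u i := by
  simp [E, show ¬ 2*s.length+3+i < s.length by omega, show ¬ 2*s.length+3+i ≤ s.length by omega,
    show ¬ 2*s.length+3+i ≤ 2*s.length by omega, show ¬ 2*s.length+3+i ≤ 2*s.length+2 by omega,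
    show 2*s.length+3+i - (2*s.length+3) = i by omega]

lemma E_tail' {i : ℕ} (h : 2 * s.length + 3 ≤ i) :
    E s j y u i = tl (code j y) u (i - (2 * s.length + 3)) := by
  have := E_tail s j y u (i - (2*s.length+3))
  rwa [show 2*s.length+3 + (i - (2*s.length+3)) = i by omega] at this

end Eval

/-- key combinatorial fact: two E-words with different `s`-lengths never coincide -/
lemma E_ne_of_length_lt {s s' : List Bool} {j j' : ℕ} {y y' u u' : CantorSpace}
    (hlt : s.length < s'.length) : E s j y u ≠ E s' j' y' u' := by
  intro h
  set n := s.length with hn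
  set m := s'.length with hm
  -- from the second representation, positions m+1 .. 2m are all `true`
  have htrue : ∀ i, m + 1 ≤ i → i ≤ 2 * m → E s j y u i = true := by
    intro i h1 h2; rw [h]; exact E_ones s' j' y' u' h1 h2
  rcases Nat.lt_or_ge (2*n) m with hcase | hcase
  · -- m ≥ 2n+1
    rcases Nat.eq_or_lt_of_le (show 2*n+1 ≤ m by omega) with hc2 | hc2
    · -- m = 2n+1 : position m+1 = 2n+2 is false in first repr
      have h1 : E s j y u (2*n+2) = false := E_z2 s j y u
      have h2 : E s j y u (2*n+2) = true := htrue (2*n+2) (by omega) (by omega)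
      rw [h1] at h2; exact Bool.false_ne_true h2
    · -- m ≥ 2n+2 : among m+1, m+2 pick the one odd relative to 2n+3
      have hm2 : 2*n+2 ≤ m := hc2
      rcases Nat.even_or_odd (m + 1 - (2*n+3)) with he | ho
      · -- then m+2 - (2n+3) is odd
        have h1 : E s j y u (m+2) = false := by
          rw [E_tail' s j y u (by omega)]
          exact tl_odd (by rcases he with ⟨b, hb⟩; omega)
        have h2 := htrue (m+2) (by omega) (by omega)
        rw [h1] at h2; exact Bool.false_ne_true h2
      · have h1 : E s j y u (m+1) = false := by
          rw [E_tail' s j y u (by omega)]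
          exact tl_odd (by rcases ho with ⟨b, hb⟩; omega)
        have h2 := htrue (m+1) (by omega) (by omega)
        rw [h1] at h2; exact Bool.false_ne_true h2
  · -- m ≤ 2n : position 2n+1 works
    have h1 : E s j y u (2*n+1) = false := E_z1 s j y u
    have h2 := htrue (2*n+1) (by omega) (by omega)
    rw [h1] at h2; exact Bool.false_ne_true h2

/-- master disjointness / injectivity statement -/
lemma E_eq_iff {s s' : List Bool} {j j' : ℕ} {y y' u u' : CantorSpace}
    (h : E s j y u = E s' j' y' u') : s = s' ∧ j = j' ∧ y = y' ∧ u = u' := by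
  have hlen : s.length = s'.length := by
    rcases lt_trichotomy s.length s'.length with hl | hl | hl
    · exact absurd h (E_ne_of_length_lt hl)
    · exact hl
    · exact absurd h.symm (E_ne_of_length_lt hl)
  have hs : s = s' := by
    apply List.ext_getElem hlen
    intro i hi hi'
    have := congrFun h i
    rwa [E_cyl s j y u hi, E_cyl s' j' y' u' hi'] at this
  subst hs
  have hcode : code j y = code j' y' := by
    funext k
    have := congrFun h (2*s.length+3 + 4*k)
    rwa [E_tail, E_tail, tl_code, tl_code] at this
  obtain ⟨hj, hy⟩ := code_inj hcode
  refine ⟨rfl, hj, hy, funext fun k => ?_⟩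
  have := congrFun h (2*s.length+3 + (4*k+2))
  rwa [E_tail, E_tail, tl_data, tl_data] at this

lemma E_injective (s : List Bool) (j : ℕ) (y : CantorSpace) :
    Function.Injective (E s j y) := fun _ _ h => (E_eq_iff h).2.2.2

lemma E_continuous (s : List Bool) (j : ℕ) (y : CantorSpace) :
    Continuous (E s j y) := by
  apply continuous_pi
  intro i
  by_cases h1 : i < s.length
  · simp only [E, h1]; exact continuous_const
  · by_cases h2 : i ≤ s.length
    · simp only [E, h1, h2]; exact continuous_const
    · by_cases h3 : i ≤ 2 * s.length
      · simp only [E, h1, h2, h3]; exact continuous_const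
      · by_cases h4 : i ≤ 2 * s.length + 2
        · simp only [E, h1, h2, h3, h4]; exact continuous_const
        · simp only [E, h1, h2, h3, h4, if_false, dif_neg]
          unfold tl
          by_cases h5 : (i - (2*s.length+3)) % 4 = 0
          · simp only [h5]; exact continuous_const
          · by_cases h6 : (i - (2*s.length+3)) % 4 = 2
            · simp only [h5, h6, if_false, if_true]
              exact continuous_apply _
            · simp only [h5, h6]; exact continuous_const





def Cyl (s : List Bool) : Set CantorSpace := {w | ∀ i, (h : i < s.length) → w i = s[i]}

lemma cyl_subset_of_isOpen {O : Set CantorSpace} (hO : IsOpen O) {z : CantorSpace}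
    (hz : z ∈ O) : ∃ s : List Bool, z ∈ Cyl s ∧ Cyl s ⊆ O := by
  obtain ⟨I, u, hu, hsub⟩ := isOpen_pi_iff.1 hO z hz
  set n := I.sup id + 1 with hn
  refine ⟨List.ofFn (fun i : Fin n => z i), ?_, ?_⟩
  · intro i hi
    simp only [List.length_ofFn] at hi
    simp only [List.getElem_ofFn]
  · intro w hw
    apply hsub
    intro a ha
    have han : a < n := by
      have := Finset.le_sup (f := id) ha
      simp only [id] at this; omega
    have hwa : w a = z a := by
      have := hw a (by rw [List.length_ofFn]; exact han)
      simpa only [List.getElem_ofFn] using this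
    rw [hwa]
    exact (hu a ha).2





/-- Gluing a point and a shrinking disjoint sequence of Cantor sets gives a Cantor set. -/
lemma glue {X : Type*} [MetricSpace X] (x : X) (C : ℕ → Set X)
    (hne : ∀ n, Nonempty (↥(C n) ≃ₜ CantorSpace))
    (hdis : ∀ m n, m ≠ n → Disjoint (C m) (C n))
    (hball : ∀ n, C n ⊆ Metric.ball x ((1/2 : ℝ)^n))
    (hx : ∀ n, x ∉ C n) :
    Nonempty (↥({x} ∪ ⋃ n, C n : Set X) ≃ₜ CantorSpace) := by
  classical
  set e : ℕ → CantorSpace → X := fun n w => ((hne n).some.symm w : ↥(C n)).val with he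
  have he_cont : ∀ n, Continuous (e n) := fun n =>
    continuous_subtype_val.comp (hne n).some.symm.continuous
  have he_inj : ∀ n, Function.Injective (e n) := fun n =>
    Subtype.val_injective.comp (hne n).some.symm.injective
  have he_mem : ∀ n w, e n w ∈ C n := fun n w => ((hne n).some.symm w).2
  have he_surj : ∀ n, ∀ c ∈ C n, ∃ w, e n w = c := by
    intro n c hc
    refine ⟨(hne n).some ⟨c, hc⟩, ?_⟩
    simp [he]
  set G : CantorSpace → X := fun z =>
    if h : ∃ k, z k = false then e (Nat.find h) (fun m => z (Nat.find h + 1 + m)) else x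
    with hG
  have hGpos : ∀ z (h : ∃ k, z k = false),
      G z = e (Nat.find h) (fun m => z (Nat.find h + 1 + m)) := by
    intro z h; simp only [hG, dif_pos h]
  have hGmem : ∀ z (h : ∃ k, z k = false), G z ∈ C (Nat.find h) := by
    intro z h; rw [hGpos z h]; exact he_mem _ _
  have hGtrue : ∀ z, (¬ ∃ k, z k = false) → G z = x := by
    intro z h; simp only [hG, dif_neg h]
  -- injectivity
  have hGinj : Function.Injective G := by
    intro z z' hzz
    by_cases h : ∃ k, z k = false
    · by_cases h' : ∃ k, z' k = false
      · have m1 := hGmem z h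
        have m2 := hGmem z' h'
        rw [hzz] at m1
        have hk : Nat.find h = Nat.find h' := by
          by_contra hne'
          exact (Set.disjoint_left.1 (hdis _ _ hne')) m1 m2
        have htl : (fun m => z (Nat.find h + 1 + m)) = (fun m => z' (Nat.find h + 1 + m)) := by
          apply he_inj (Nat.find h)
          rw [← hGpos z h, hzz, hGpos z' h', hk]
        funext i
        rcases lt_trichotomy i (Nat.find h) with hik | hik | hik
        · have n1 : ¬ z i = false := Nat.find_min h hik
          have n2 : ¬ z' i = false := Nat.find_min h' (hk ▸ hik)
          rw [Bool.not_eq_false] at n1 n2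
          rw [n1, n2]
        · have hzf : z i = false := by rw [hik]; exact Nat.find_spec h
          have hzf' : z' i = false := by rw [hik, hk]; exact Nat.find_spec h'
          rw [hzf, hzf']
        · have hi : i = Nat.find h + 1 + (i - (Nat.find h + 1)) := by omega
          rw [hi]
          exact congrFun htl _
      · exfalso
        have m1 := hGmem z h
        rw [hzz, hGtrue z' h'] at m1
        exact hx _ m1
    · by_cases h' : ∃ k, z' k = false
      · exfalso
        have m2 := hGmem z' h'
        rw [← hzz, hGtrue z h] at m2
        exact hx _ m2
      · push_neg at h h'
        funext k
        have h1 : z k = true := by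
          have := h k; rwa [ne_eq, Bool.not_eq_false] at this
        have h2 : z' k = true := by
          have := h' k; rwa [ne_eq, Bool.not_eq_false] at this
        rw [h1, h2]
  -- continuity
  have prefOpen : ∀ (N : ℕ) (z₀ : CantorSpace),
      IsOpen {z : CantorSpace | ∀ i < N, z i = z₀ i} ∧
      z₀ ∈ {z : CantorSpace | ∀ i < N, z i = z₀ i} := by
    intro N z₀
    constructor
    · have : {z : CantorSpace | ∀ i < N, z i = z₀ i} =
          ⋂ i : Fin N, (fun z : CantorSpace => z i.1) ⁻¹' {z₀ i.1} := by
        ext z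
        simp only [Set.mem_setOf_eq, Set.mem_iInter, Set.mem_preimage, Set.mem_singleton_iff]
        exact ⟨fun hz i => hz i.1 i.2, fun hz i hi => hz ⟨i, hi⟩⟩
      rw [this]
      exact isOpen_iInter_of_finite fun i =>
        (continuous_apply i.1).isOpen_preimage _ (isOpen_discrete _)
    · intro i _; rfl
  have hGcont : Continuous G := by
    rw [continuous_iff_continuousAt]
    intro z₀
    by_cases h₀ : ∃ k, z₀ k = false
    · set k₀ := Nat.find h₀ with hk₀
      have hmemN : {z : CantorSpace | ∀ i < k₀ + 1, z i = z₀ i} ∈ nhds z₀ :=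
        (prefOpen (k₀+1) z₀).1.mem_nhds (prefOpen (k₀+1) z₀).2
      have hcontf : ContinuousAt (fun z : CantorSpace => e k₀ (fun m => z (k₀ + 1 + m))) z₀ :=
        ((he_cont k₀).comp (continuous_pi fun m => continuous_apply (k₀ + 1 + m))).continuousAt
      apply hcontf.congr
      apply Filter.eventuallyEq_of_mem hmemN
      intro z hz
      have hzk : z k₀ = false := by
        rw [hz k₀ (by omega)]; exact Nat.find_spec h₀
      have hzex : ∃ k, z k = false := ⟨k₀, hzk⟩
      have hfind : Nat.find hzex = k₀ := by
        apply le_antisymm (Nat.find_min' hzex hzk)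
        rw [Nat.le_find_iff]
        intro m hm hzm
        have : z₀ m = false := by rw [← hz m (by omega)]; exact hzm
        exact Nat.find_min h₀ hm this
      rw [hGpos z hzex, hfind]
    · have hGz₀ : G z₀ = x := hGtrue z₀ h₀
      unfold ContinuousAt
      rw [hGz₀, Metric.tendsto_nhds]
      intro ε hε
      obtain ⟨N, hN⟩ : ∃ N : ℕ, (1/2 : ℝ)^N < ε := exists_pow_lt_of_lt_one hε (by norm_num)
      apply Filter.eventually_of_mem
        ((prefOpen N z₀).1.mem_nhds (prefOpen N z₀).2)
      intro z hz
      by_cases hzex : ∃ k, z k = false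
      · have hNk : N ≤ Nat.find hzex := by
          rw [Nat.le_find_iff]
          intro m hm hzm
          have h1 : z₀ m = false := by rw [← hz m hm]; exact hzm
          exact h₀ ⟨m, h1⟩
        have hmem := hGmem z hzex
        have := hball (Nat.find hzex) hmem
        rw [Metric.mem_ball] at this
        calc dist (G z) x < (1/2 : ℝ)^(Nat.find hzex) := this
          _ ≤ (1/2 : ℝ)^N := pow_le_pow_of_le_one (by norm_num) (by norm_num) hNk
          _ < ε := hN
      · rw [hGtrue z hzex]
        simpa using hε
  -- range
  have hrange : Set.range G = {x} ∪ ⋃ n, C n := by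
    apply subset_antisymm
    · rintro _ ⟨z, rfl⟩
      by_cases hz : ∃ k, z k = false
      · exact Or.inr (Set.mem_iUnion.2 ⟨Nat.find hz, hGmem z hz⟩)
      · rw [hGtrue z hz]; exact Or.inl rfl
    · rintro w (hw | hw)
      · rw [Set.mem_singleton_iff] at hw
        subst hw
        refine ⟨fun _ => true, ?_⟩
        apply hGtrue
        simp
      · obtain ⟨n, hc⟩ := Set.mem_iUnion.1 hw
        obtain ⟨w', rfl⟩ := he_surj n w hc
        set z : CantorSpace := fun i => if i < n then true else if i = n then false
          else w' (i - (n+1)) with hzdef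
        have hzex : ∃ k, z k = false := ⟨n, by simp [hzdef]⟩
        have hfind : Nat.find hzex = n := by
          apply le_antisymm (Nat.find_min' hzex (by simp [hzdef]))
          rw [Nat.le_find_iff]
          intro m hm hzm
          rw [hzdef] at hzm
          simp only [if_pos hm] at hzm
          exact Bool.true_eq_false_eq_False hzm
        refine ⟨z, ?_⟩
        rw [hGpos z hzex, hfind]
        congr 1
        funext m
        simp only [hzdef, show ¬ (n + 1 + m < n) by omega, if_false,
          show ¬ (n + 1 + m = n) by omega, show n + 1 + m - (n+1) = m by omega]
  exact ⟨(Homeomorph.setCongr hrange).symm.trans (homeoRange G hGcont hGinj).symm⟩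




variable {X : Type*} [MetricSpace X]

def famT (m j : ℕ) (c : X) : Set X :=
  {z | Metric.ball z ((1/2:ℝ)^(m+j)) ⊆ Metric.ball c ((1/2:ℝ)^m) ∧
       ∀ c', WellOrderingRel c' c → z ∉ Metric.ball c' ((1/2:ℝ)^m)}

/-- the σ-disjoint base family -/
def fam (m j : ℕ) (c : X) : Set X :=
  ⋃ z ∈ famT m j c, Metric.ball z ((1/2:ℝ)^(m+j+2))

lemma fam_isOpen (m j : ℕ) (c : X) : IsOpen (fam m j c) :=
  isOpen_biUnion fun _ _ => Metric.isOpen_ball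

lemma pow_half_pos (n : ℕ) : (0:ℝ) < (1/2:ℝ)^n := by positivity

lemma fam_disjoint (m j : ℕ) {c c' : X} (h : c ≠ c') :
    Disjoint (fam m j c) (fam m j c') := by
  have key : ∀ c₁ c₂ : X, WellOrderingRel c₁ c₂ →
      Disjoint (fam m j c₁) (fam m j c₂) := by
    intro c₁ c₂ hrel
    rw [Set.disjoint_left]
    rintro w hw1 hw2
    obtain ⟨z, hz, hwz⟩ := Set.mem_iUnion₂.1 hw1
    obtain ⟨z', hz', hwz'⟩ := Set.mem_iUnion₂.1 hw2
    have hz'n : z' ∉ Metric.ball c₁ ((1/2:ℝ)^m) := hz'.2 c₁ hrel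
    apply hz'n
    apply hz.1
    rw [Metric.mem_ball] at hwz hwz' ⊢
    have harith : (1/2:ℝ)^(m+j+2) + (1/2:ℝ)^(m+j+2) < (1/2:ℝ)^(m+j) := by
      have h1 : (1/2:ℝ)^(m+j+2) = (1/2:ℝ)^(m+j) * (1/4) := by
        rw [pow_add]; norm_num
      have h2 := pow_half_pos (m+j)
      rw [h1]; linarith
    calc dist z' z ≤ dist z' w + dist w z := dist_triangle _ _ _
      _ = dist w z' + dist w z := by rw [dist_comm z' w]
      _ < (1/2:ℝ)^(m+j+2) + (1/2:ℝ)^(m+j+2) := by linarith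
      _ < (1/2:ℝ)^(m+j) := harith
  rcases trichotomous_of (WellOrderingRel (α := X)) c c' with hr | hr | hr
  · exact key c c' hr
  · exact absurd hr h
  · exact (key c' c hr).symm

lemma fam_base (y : X) {ε : ℝ} (hε : 0 < ε) :
    ∃ (m j : ℕ) (c : X), y ∈ fam m j c ∧ fam m j c ⊆ Metric.ball y ε := by
  obtain ⟨m, hm⟩ : ∃ m : ℕ, (1/2:ℝ)^m < ε/3 :=
    exists_pow_lt_of_lt_one (by linarith) (by norm_num)
  have wf : WellFounded (WellOrderingRel : X → X → Prop) := IsWellFounded.wf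
  have hSne : ({c' : X | y ∈ Metric.ball c' ((1/2:ℝ)^m)}).Nonempty :=
    ⟨y, by simp [Metric.mem_ball, pow_half_pos m]⟩
  set c := wf.min _ hSne with hc
  have hyc : y ∈ Metric.ball c ((1/2:ℝ)^m) := wf.min_mem _ hSne
  have hmin : ∀ c', WellOrderingRel c' c → y ∉ Metric.ball c' ((1/2:ℝ)^m) := by
    intro c' hrel hmem
    exact wf.not_lt_min {c' : X | y ∈ Metric.ball c' ((1/2:ℝ)^m)} hmem hrel
  rw [Metric.mem_ball] at hyc
  obtain ⟨j, hj⟩ : ∃ j : ℕ, (1/2:ℝ)^(m+j) < (1/2:ℝ)^m - dist y c := by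
    obtain ⟨j, hj⟩ : ∃ j : ℕ, (1/2:ℝ)^j < (1/2:ℝ)^m - dist y c :=
      exists_pow_lt_of_lt_one (by linarith) (by norm_num)
    exact ⟨j, lt_of_le_of_lt
      (pow_le_pow_of_le_one (by norm_num) (by norm_num) (by omega)) hj⟩
  have hyT : y ∈ famT m j c := by
    constructor
    · intro w hw
      rw [Metric.mem_ball] at hw ⊢
      calc dist w c ≤ dist w y + dist y c := dist_triangle _ _ _
        _ < (1/2:ℝ)^(m+j) + dist y c := by linarith
        _ ≤ (1/2:ℝ)^m := by linarith
    · exact hmin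
  refine ⟨m, j, c, ?_, ?_⟩
  · exact Set.mem_biUnion hyT (by simp [Metric.mem_ball, pow_half_pos (m+j+2)])
  · intro w hw
    obtain ⟨z, hz, hwz⟩ := Set.mem_iUnion₂.1 hw
    have hzc : z ∈ Metric.ball c ((1/2:ℝ)^m) :=
      hz.1 (by simp [Metric.mem_ball, pow_half_pos (m+j)])
    rw [Metric.mem_ball] at hwz hzc ⊢
    have h2 : (1/2:ℝ)^(m+j+2) ≤ (1/2:ℝ)^m :=
      pow_le_pow_of_le_one (by norm_num) (by norm_num) (by omega)
    calc dist w y ≤ dist w z + dist z c + dist c y := dist_triangle4 _ _ _ _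
      _ < (1/2:ℝ)^(m+j+2) + (1/2:ℝ)^m + (1/2:ℝ)^m := by
          rw [dist_comm c y]; linarith
      _ ≤ 3 * ((1/2:ℝ)^m) := by linarith
      _ < ε := by linarith



end CantorAux

namespace CantorAux

lemma E_mem_cyl (s : List Bool) (j : ℕ) (y u : CantorSpace) : E s j y u ∈ Cyl s :=
  fun i h => E_cyl s j y u h

lemma range_E_disjoint {s s' : List Bool} {j j' : ℕ} {y y' : CantorSpace}
    (h : ¬ (s = s' ∧ j = j' ∧ y = y')) :
    Disjoint (Set.range (E s j y)) (Set.range (E s' j' y')) := by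
  rw [Set.disjoint_left]
  rintro x ⟨u, rfl⟩ ⟨u', hu'⟩
  obtain ⟨h1, h2, h3, _⟩ := E_eq_iff hu'.symm
  exact h ⟨h1, h2, h3⟩

variable {X : Type*} [TopologicalSpace X]

/-- pieces: Cantor subsets of a Cantor-set member, localized to cylinder `s`,
with color `j` and index `y`. -/
def piece (K : Set X) (φ : ↥K ≃ₜ CantorSpace) (s : List Bool) (j : ℕ) (y : CantorSpace) :
    Set X :=
  Subtype.val '' (⇑φ ⁻¹' (Set.range (E s j y)))

lemma piece_subset (K : Set X) (φ : ↥K ≃ₜ CantorSpace) (s : List Bool) (j : ℕ)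
    (y : CantorSpace) : piece K φ s j y ⊆ K := by
  rintro x ⟨a, _, rfl⟩; exact a.2

lemma piece_nonempty (K : Set X) (φ : ↥K ≃ₜ CantorSpace) (s : List Bool) (j : ℕ)
    (y : CantorSpace) : (piece K φ s j y).Nonempty := by
  refine ⟨(φ.symm (E s j y fun _ => true)).1, φ.symm (E s j y fun _ => true), ?_, rfl⟩
  simp only [Set.mem_preimage, Homeomorph.apply_symm_apply]
  exact ⟨_, rfl⟩

lemma piece_homeo (K : Set X) (φ : ↥K ≃ₜ CantorSpace) (s : List Bool) (j : ℕ)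
    (y : CantorSpace) : Nonempty (↥(piece K φ s j y) ≃ₜ CantorSpace) := by
  refine ⟨(valImageHomeo _).trans ((φ.image _).trans ?_)⟩
  rw [Homeomorph.image_preimage]
  exact (homeoRange (E s j y) (E_continuous s j y) (E_injective s j y)).symm

lemma piece_disjoint {K : Set X} (φ : ↥K ≃ₜ CantorSpace) {s s' : List Bool} {j j' : ℕ}
    {y y' : CantorSpace} (h : ¬ (s = s' ∧ j = j' ∧ y = y')) :
    Disjoint (piece K φ s j y) (piece K φ s' j' y') := by
  apply Set.disjoint_image_of_injective Subtype.val_injective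
  exact Disjoint.preimage _ (range_E_disjoint h)

/-- two pieces are either equal or disjoint; and equal only when parameters agree -/
lemma piece_param_eq {K : Set X} (φ : ↥K ≃ₜ CantorSpace) {s s' : List Bool} {j j' : ℕ}
    {y y' : CantorSpace} (h : piece K φ s j y = piece K φ s' j' y') :
    s = s' ∧ j = j' ∧ y = y' := by
  by_contra hne
  have hd := piece_disjoint φ hne
  rw [h] at hd
  exact (piece_nonempty K φ s' j' y').ne_empty (disjoint_self.1 hd)

/-- localization: inside any open set meeting `K` there is a cylinder all of whose
pieces lie in the open set -/
lemma pieces_in_open {K U : Set X} (hU : IsOpen U) (φ : ↥K ≃ₜ CantorSpace)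
    (hKU : (K ∩ U).Nonempty) : ∃ s : List Bool, ∀ j y, piece K φ s j y ⊆ U := by
  obtain ⟨x, hxK, hxU⟩ := hKU
  have hV : IsOpen (Subtype.val ⁻¹' U : Set ↥K) := hU.preimage continuous_subtype_val
  have hVim : IsOpen (⇑φ '' (Subtype.val ⁻¹' U)) := φ.isOpen_image.2 hV
  have hz : φ ⟨x, hxK⟩ ∈ ⇑φ '' (Subtype.val ⁻¹' U) := ⟨⟨x, hxK⟩, hxU, rfl⟩
  obtain ⟨s, _, hs⟩ := cyl_subset_of_isOpen hVim hz
  refine ⟨s, fun j y => ?_⟩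
  rintro w ⟨a, ha, rfl⟩
  rw [Set.mem_preimage] at ha
  have : φ a ∈ ⇑φ '' (Subtype.val ⁻¹' U) := hs (by
    obtain ⟨u, hu⟩ := ha
    rw [← hu]; exact E_mem_cyl s j y u)
  obtain ⟨b, hb, hba⟩ := this
  have hab : b = a := φ.injective hba
  rw [← hab]
  exact hb

lemma member_nonempty {K : Set X} (h : Nonempty (↥K ≃ₜ CantorSpace)) : K.Nonempty :=
  ⟨(h.some.symm (fun _ => true)).1, (h.some.symm (fun _ => true)).2⟩

omit [TopologicalSpace X] in
/-- a pairwise disjoint family of nonempty subsets of U is no larger than U -/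
lemma mk_family_le {U : Set X} {R : Set (Set X)} (hdisj : R.PairwiseDisjoint id)
    (hne : ∀ T ∈ R, T.Nonempty) (hsub : ∀ T ∈ R, T ⊆ U) : #↥R ≤ #↥U := by
  have hchoice : ∀ T : ↥R, ∃ x : X, x ∈ (T : Set X) := fun T => hne T.1 T.2
  choose pt hpt using hchoice
  refine Cardinal.mk_le_of_injective (f := fun T : ↥R => (⟨pt T, hsub T.1 T.2 (hpt T)⟩ : ↥U)) ?_
  intro T₁ T₂ h
  ext1
  by_contra hne'
  have hd := hdisj T₁.2 T₂.2 hne'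
  simp only [Subtype.mk.injEq] at h
  exact Set.disjoint_left.1 hd (hpt T₁) (h ▸ hpt T₂)

lemma mk_le_of_cover {M : Set (Set X)} (hhom : ∀ K ∈ M, Nonempty (↥K ≃ₜ CantorSpace))
    {U : Set X} (hcover : U ⊆ ⋃₀ M) : #↥U ≤ #↥M * continuum := by
  rcases Set.eq_empty_or_nonempty M with hM | hM
  · subst hM
    simp only [Set.sUnion_empty] at hcover
    rw [Set.subset_empty_iff.1 hcover]
    simp
  · calc #↥U ≤ #↥(⋃₀ M) := Cardinal.mk_le_mk_of_subset hcover
      _ ≤ #↥M * ⨆ s : ↥M, #↥(s : Set X) := Cardinal.mk_sUnion_le M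
      _ ≤ #↥M * continuum := by
          apply mul_le_mul_right
          have : Nonempty ↥M := hM.to_subtype
          exact ciSup_le' fun s => le_of_eq (mk_of_homeo (hhom s.1 s.2))

end CantorAux

namespace CantorAux

variable {X : Type*} [TopologicalSpace X]

lemma piece_trichotomy {Q : Set (Set X)} (hdis : Q.PairwiseDisjoint id)
    (φ : ∀ K, K ∈ Q → (↥K ≃ₜ CantorSpace)) {K K' : Set X} (hK : K ∈ Q) (hK' : K' ∈ Q)
    (s s' : List Bool) (j j' : ℕ) (y y' : CantorSpace) :
    (K = K' ∧ s = s' ∧ j = j' ∧ y = y') ∨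
      Disjoint (piece K (φ K hK) s j y) (piece K' (φ K' hK') s' j' y') := by
  by_cases hKK : K = K'
  · subst hKK
    by_cases hp : s = s' ∧ j = j' ∧ y = y'
    · exact Or.inl ⟨rfl, hp⟩
    · right
      have hpf : hK = hK' := rfl
      subst hpf
      exact piece_disjoint (φ K hK) hp
  · exact Or.inr (Disjoint.mono (piece_subset _ _ _ _ _) (piece_subset _ _ _ _ _)
      (hdis hK hK' hKK))

lemma piece_param_eq_global {Q : Set (Set X)} (hdis : Q.PairwiseDisjoint id)
    (φ : ∀ K, K ∈ Q → (↥K ≃ₜ CantorSpace)) {K K' : Set X} (hK : K ∈ Q) (hK' : K' ∈ Q)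
    {s s' : List Bool} {j j' : ℕ} {y y' : CantorSpace}
    (h : piece K (φ K hK) s j y = piece K' (φ K' hK') s' j' y') :
    K = K' ∧ s = s' ∧ j = j' ∧ y = y' := by
  rcases piece_trichotomy hdis φ hK hK' s s' j j' y y' with h1 | h1
  · exact h1
  · exfalso
    rw [h] at h1
    exact (piece_nonempty K' (φ K' hK') s' j' y').ne_empty (disjoint_self.1 h1)

/-- The per-open-set packing (used for (1)→(5) and (4)→(5)). -/
lemma pack_pieces {Q : Set (Set X)} (hhom : ∀ K ∈ Q, Nonempty (↥K ≃ₜ CantorSpace))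
    (hdis : Q.PairwiseDisjoint id) {U : Set X} (hU : IsOpen U) :
    ∃ R : Set (Set X), IsPacking CantorSpace R ∧ (∀ T ∈ R, T ⊆ U) ∧ #↥R ≤ #↥U ∧
      #{K : Set X // K ∈ Q ∧ (K ∩ U).Nonempty} * continuum ≤ #↥R := by
  classical
  set M : Set (Set X) := {K | K ∈ Q ∧ (K ∩ U).Nonempty} with hM
  have hhom' : ∀ K (h : K ∈ M), Nonempty (↥K ≃ₜ CantorSpace) := fun K h => hhom K h.1
  set φ : ∀ K, K ∈ Q → (↥K ≃ₜ CantorSpace) := fun K h => (hhom K h).some with hφ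
  have hsel : ∀ K (h : K ∈ M), ∃ s : List Bool, ∀ j y, piece K (φ K h.1) s j y ⊆ U :=
    fun K h => pieces_in_open hU (φ K h.1) h.2
  choose sel hselspec using hsel
  set R : Set (Set X) := {T | ∃ K, ∃ h : K ∈ M, ∃ y, T = piece K (φ K h.1) (sel K h) 0 y}
    with hR
  have hmemR : ∀ K (h : K ∈ M) y, piece K (φ K h.1) (sel K h) 0 y ∈ R :=
    fun K h y => ⟨K, h, y, rfl⟩
  refine ⟨R, ⟨?_, ?_⟩, ?_, ?_, ?_⟩
  · rintro T ⟨K, h, y, rfl⟩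
    exact piece_homeo _ _ _ _ _
  · rintro T ⟨K, h, y, rfl⟩ T' ⟨K', h', y', rfl⟩ hne
    rcases piece_trichotomy hdis φ h.1 h'.1 (sel K h) (sel K' h') 0 0 y y' with he | hd
    · exfalso
      obtain ⟨hKK, hss, _, hyy⟩ := he
      subst hKK; subst hyy
      exact hne (by rw [hss])
    · exact hd
  · rintro T ⟨K, h, y, rfl⟩
    exact hselspec K h 0 y
  · apply mk_family_le
    · rintro T ⟨K, h, y, rfl⟩ T' ⟨K', h', y', rfl⟩ hne
      rcases piece_trichotomy hdis φ h.1 h'.1 (sel K h) (sel K' h') 0 0 y y' with he | hd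
      · exfalso
        obtain ⟨hKK, hss, _, hyy⟩ := he
        subst hKK; subst hyy
        exact hne (by rw [hss])
      · exact hd
    · rintro T ⟨K, h, y, rfl⟩
      exact piece_nonempty _ _ _ _ _
    · rintro T ⟨K, h, y, rfl⟩
      exact hselspec K h 0 y
  · have hinj : Function.Injective
        (fun p : ↥M × CantorSpace => (⟨piece p.1.1 (φ p.1.1 p.1.2.1) (sel p.1.1 p.1.2) 0 p.2,
          hmemR p.1.1 p.1.2 p.2⟩ : ↥R)) := by
      rintro ⟨⟨K, h⟩, y⟩ ⟨⟨K', h'⟩, y'⟩ hp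
      simp only [Subtype.mk.injEq] at hp
      obtain ⟨hKK, _, _, hyy⟩ := piece_param_eq_global hdis φ h.1 h'.1 hp
      subst hKK; subst hyy; rfl
    have h2 := Cardinal.mk_le_of_injective hinj
    have h3 : #(↥M × CantorSpace) = #↥M * continuum := by
      simp [Cardinal.mk_prod, Cardinal.lift_id, Cardinal.lift_uzero, mk_cantor,
        Cardinal.lift_continuum]
    rw [h3] at h2
    exact h2

end CantorAux

namespace CantorAux

variable {X : Type*} [TopologicalSpace X]

/-- The global piece packing (used for (5)→(3)). -/
lemma global_pieces {Q : Set (Set X)} (hhom : ∀ K ∈ Q, Nonempty (↥K ≃ₜ CantorSpace))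
    (hdis : Q.PairwiseDisjoint id) :
    ∃ R : Set (Set X), IsPacking CantorSpace R ∧
      ∀ U : Set X, IsOpen U →
        #{K : Set X // K ∈ Q ∧ (K ∩ U).Nonempty} * continuum ≤
          #{T : Set X // T ∈ R ∧ T ⊆ U} := by
  classical
  set φ : ∀ K, K ∈ Q → (↥K ≃ₜ CantorSpace) := fun K h => (hhom K h).some with hφ
  set R : Set (Set X) := {T | ∃ K, ∃ h : K ∈ Q, ∃ s y, T = piece K (φ K h) s 0 y} with hR
  refine ⟨R, ⟨?_, ?_⟩, ?_⟩
  · rintro T ⟨K, h, s, y, rfl⟩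
    exact piece_homeo _ _ _ _ _
  · rintro T ⟨K, h, s, y, rfl⟩ T' ⟨K', h', s', y', rfl⟩ hne
    rcases piece_trichotomy hdis φ h h' s s' 0 0 y y' with he | hd
    · exfalso
      obtain ⟨hKK, hss, _, hyy⟩ := he
      subst hKK; subst hyy; subst hss
      exact hne rfl
    · exact hd
  · intro U hU
    set M : Set (Set X) := {K | K ∈ Q ∧ (K ∩ U).Nonempty} with hM
    have hsel : ∀ K (h : K ∈ M), ∃ s : List Bool, ∀ j y, piece K (φ K h.1) s j y ⊆ U :=
      fun K h => pieces_in_open hU (φ K h.1) h.2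
    choose sel hselspec using hsel
    have hinj : Function.Injective
        (fun p : ↥M × CantorSpace =>
          (⟨piece p.1.1 (φ p.1.1 p.1.2.1) (sel p.1.1 p.1.2) 0 p.2,
            ⟨p.1.1, p.1.2.1, sel p.1.1 p.1.2, p.2, rfl⟩,
            hselspec p.1.1 p.1.2 0 p.2⟩ : {T : Set X // T ∈ R ∧ T ⊆ U})) := by
      rintro ⟨⟨K, h⟩, y⟩ ⟨⟨K', h'⟩, y'⟩ hp
      simp only [Subtype.mk.injEq] at hp
      obtain ⟨hKK, _, _, hyy⟩ := piece_param_eq_global hdis φ h.1 h'.1 hp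
      subst hKK; subst hyy; rfl
    have h2 := Cardinal.mk_le_of_injective hinj
    have h3 : #(↥M × CantorSpace) = #↥M * continuum := by
      simp [Cardinal.mk_prod, Cardinal.lift_id, Cardinal.lift_uzero, mk_cantor,
        Cardinal.lift_continuum]
    rw [h3] at h2
    exact h2

/-- (1) → (5) -/
lemma one_to_five (h1 : Partitionable X CantorSpace) :
    ∀ U : Set X, IsOpen U →
      ∃ Q : Set (Set X), IsPacking CantorSpace Q ∧ (∀ K ∈ Q, K ⊆ U) ∧ #↥Q = #↥U := by
  obtain ⟨P, hhom, hdis, hcov⟩ := h1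
  intro U hU
  obtain ⟨R, hRpack, hRsub, hRle, hRge⟩ := pack_pieces hhom hdis hU
  refine ⟨R, hRpack, hRsub, le_antisymm hRle ?_⟩
  have hcover : U ⊆ ⋃₀ {K | K ∈ P ∧ (K ∩ U).Nonempty} := by
    intro x hx
    have hx2 : x ∈ ⋃₀ P := by rw [hcov]; trivial
    obtain ⟨K, hK, hxK⟩ := hx2
    exact ⟨K, ⟨hK, ⟨x, hxK, hx⟩⟩, hxK⟩
  have h1 : #↥U ≤ #↥{K | K ∈ P ∧ (K ∩ U).Nonempty} * continuum :=
    mk_le_of_cover (fun K h => hhom K h.1) hcover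
  exact h1.trans hRge

/-- (4) → (5) -/
lemma four_to_five {Q : Set (Set X)} (hQ : IsPacking CantorSpace Q)
    (hmeet : ∀ U : Set X, IsOpen U → U.Nonempty → ∃ K ∈ Q, (K ∩ U).Nonempty)
    (hbig : ∀ U : Set X, IsOpen U → Cardinal.continuum < #↥U →
      #↥U ≤ #{K : Set X // K ∈ Q ∧ (K ∩ U).Nonempty}) :
    ∀ U : Set X, IsOpen U →
      ∃ R : Set (Set X), IsPacking CantorSpace R ∧ (∀ K ∈ R, K ⊆ U) ∧ #↥R = #↥U := by
  intro U hU
  rcases Set.eq_empty_or_nonempty U with hUe | hUne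
  · refine ⟨∅, ⟨fun K h => absurd h (Set.notMem_empty K), Set.pairwiseDisjoint_empty⟩,
      fun K h => absurd h (Set.notMem_empty K), ?_⟩
    subst hUe
    simp
  · obtain ⟨R, hRpack, hRsub, hRle, hRge⟩ := pack_pieces hQ.1 hQ.2 hU
    refine ⟨R, hRpack, hRsub, le_antisymm hRle ?_⟩
    have hMne : Nonempty {K : Set X // K ∈ Q ∧ (K ∩ U).Nonempty} := by
      obtain ⟨K, hK, hke⟩ := hmeet U hU hUne
      exact ⟨⟨K, hK, hke⟩⟩
    have hM1 : (1 : Cardinal) ≤ #{K : Set X // K ∈ Q ∧ (K ∩ U).Nonempty} :=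
      Cardinal.one_le_iff_ne_zero.2 (Cardinal.mk_ne_zero _)
    rcases le_or_gt (#↥U) continuum with hle | hlt
    · calc #↥U ≤ continuum := hle
        _ = 1 * continuum := (one_mul _).symm
        _ ≤ #{K : Set X // K ∈ Q ∧ (K ∩ U).Nonempty} * continuum :=
            mul_le_mul_left hM1 _
        _ ≤ #↥R := hRge
    · calc #↥U ≤ #{K : Set X // K ∈ Q ∧ (K ∩ U).Nonempty} := hbig U hU hlt
        _ = #{K : Set X // K ∈ Q ∧ (K ∩ U).Nonempty} * 1 := (mul_one _).symm
        _ ≤ #{K : Set X // K ∈ Q ∧ (K ∩ U).Nonempty} * continuum :=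
            mul_le_mul_right (Cardinal.one_le_iff_ne_zero.2 (by
              simpa using Cardinal.continuum_pos.ne')) _
        _ ≤ #↥R := hRge

end CantorAux

namespace CantorAux

variable {X : Type*} [TopologicalSpace X]

lemma exists_max_packing : ∃ Q₀ : Set (Set X), Maximal (IsPacking CantorSpace) Q₀ := by
  apply zorn_subset {Q : Set (Set X) | IsPacking CantorSpace Q}
  intro c hcsub hchain
  refine ⟨⋃₀ c, ⟨?_, ?_⟩, fun s hs => Set.subset_sUnion_of_mem hs⟩
  · rintro K ⟨Q, hQ, hKQ⟩
    exact (hcsub hQ).1 K hKQ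
  · rintro K ⟨Q, hQ, hKQ⟩ K' ⟨Q', hQ', hKQ'⟩ hne
    rcases hchain.total hQ hQ' with hsub | hsub
    · exact (hcsub hQ').2 (hsub hKQ) hKQ' hne
    · exact (hcsub hQ).2 hKQ (hsub hKQ') hne

/-- key cardinality bound from maximality, assuming (5) -/
lemma max_packing_bound
    (h5 : ∀ U : Set X, IsOpen U →
      ∃ Q : Set (Set X), IsPacking CantorSpace Q ∧ (∀ K ∈ Q, K ⊆ U) ∧ #↥Q = #↥U)
    {Q₀ : Set (Set X)} (hmax : Maximal (IsPacking CantorSpace) Q₀)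
    {U : Set X} (hU : IsOpen U) :
    #↥U ≤ #{K : Set X // K ∈ Q₀ ∧ (K ∩ U).Nonempty} * continuum := by
  classical
  by_contra hcon
  push_neg at hcon
  obtain ⟨PU, hPUpack, hPUsub, hPUcard⟩ := h5 U hU
  set M : Set (Set X) := {K | K ∈ Q₀ ∧ (K ∩ U).Nonempty} with hM
  have hMeq : #↥M = #{K : Set X // K ∈ Q₀ ∧ (K ∩ U).Nonempty} := rfl
  set S : Set X := U ∩ ⋃₀ Q₀ with hS
  have hSsub : S ⊆ ⋃ K : ↥M, ((K : Set X) ∩ U) := by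
    rintro x ⟨hxU, K, hK, hxK⟩
    exact Set.mem_iUnion.2 ⟨⟨K, hK, ⟨x, hxK, hxU⟩⟩, hxK, hxU⟩
  have hSle : #↥S ≤ #↥M * continuum := by
    rcases isEmpty_or_nonempty ↥M with hMe | hMne
    · have : S ⊆ ∅ := by
        intro x hx
        obtain ⟨K, -⟩ := Set.mem_iUnion.1 (hSsub hx)
        exact (hMe.false K).elim
      rw [Set.subset_empty_iff.1 this]
      simp
    · calc #↥S ≤ #↥(⋃ K : ↥M, ((K : Set X) ∩ U)) := Cardinal.mk_le_mk_of_subset hSsub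
        _ ≤ #↥M * ⨆ K : ↥M, #↥((K : Set X) ∩ U) := Cardinal.mk_iUnion_le _
        _ ≤ #↥M * continuum := by
            apply mul_le_mul_right
            apply ciSup_le'
            intro K
            calc #↥((K : Set X) ∩ U) ≤ #↥(K : Set X) :=
                  Cardinal.mk_le_mk_of_subset Set.inter_subset_left
              _ = continuum := mk_of_homeo (hmax.prop.1 K K.2.1)
  have hSlt : #↥S < #↥PU := by
    rw [hPUcard]
    exact lt_of_le_of_lt hSle (hMeq ▸ hcon)
  -- find a member of PU missing S
  have hex : ∃ T ∈ PU, T ∩ S = ∅ := by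
    by_contra hall
    push_neg at hall
    have hall' : ∀ T : ↥PU, ∃ x : X, x ∈ (T : Set X) ∩ S := by
      intro T
      exact hall T.1 T.2
    choose pt hpt using hall'
    have hinj : Function.Injective (fun T : ↥PU => (⟨pt T, (hpt T).2⟩ : ↥S)) := by
      intro T₁ T₂ h
      ext1
      by_contra hne
      have hd := hPUpack.2 T₁.2 T₂.2 (by simpa using hne)
      simp only [Subtype.mk.injEq] at h
      exact Set.disjoint_left.1 hd (hpt T₁).1 (h ▸ (hpt T₂).1)
    exact absurd (Cardinal.mk_le_of_injective hinj) (not_le.2 hSlt)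
  obtain ⟨T, hTPU, hTS⟩ := hex
  have hTne : T.Nonempty := member_nonempty (hPUpack.1 T hTPU)
  have hTdisj : ∀ K ∈ Q₀, Disjoint T K := by
    intro K hK
    rw [Set.disjoint_left]
    intro x hxT hxK
    have : x ∈ T ∩ S := ⟨hxT, hPUsub T hTPU hxT, K, hK, hxK⟩
    rw [hTS] at this
    exact this
  have hTnotin : T ∉ Q₀ := by
    intro hTQ
    exact hTne.ne_empty (disjoint_self.1 (hTdisj T hTQ))
  have hpack' : IsPacking CantorSpace (insert T Q₀) := by
    constructor
    · intro K hK
      rcases Set.mem_insert_iff.1 hK with hKT | hK2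
      · rw [hKT]; exact hPUpack.1 T hTPU
      · exact hmax.prop.1 K hK2
    · intro K hK K' hK' hne
      rcases Set.mem_insert_iff.1 hK with hKT | hK2 <;>
        rcases Set.mem_insert_iff.1 hK' with hKT' | hK2'
      · exact absurd (hKT.trans hKT'.symm) hne
      · rw [hKT]; exact hTdisj K' hK2'
      · rw [hKT']; exact (hTdisj K hK2).symm
      · exact hmax.prop.2 hK2 hK2' hne
  have := hmax.2 hpack' (Set.subset_insert T Q₀)
  exact hTnotin (this (Set.mem_insert T Q₀))

/-- (5) → (3) -/
lemma five_to_three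
    (h5 : ∀ U : Set X, IsOpen U →
      ∃ Q : Set (Set X), IsPacking CantorSpace Q ∧ (∀ K ∈ Q, K ⊆ U) ∧ #↥Q = #↥U) :
    ∃ Q : Set (Set X), IsPacking CantorSpace Q ∧
      ∀ U : Set X, IsOpen U → #↥U ≤ #{K : Set X // K ∈ Q ∧ K ⊆ U} := by
  obtain ⟨Q₀, hmax⟩ := exists_max_packing (X := X)
  obtain ⟨R, hRpack, hRbound⟩ := global_pieces hmax.prop.1 hmax.prop.2
  refine ⟨R, hRpack, fun U hU => ?_⟩
  calc #↥U ≤ #{K : Set X // K ∈ Q₀ ∧ (K ∩ U).Nonempty} * continuum :=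
        max_packing_bound h5 hmax hU
    _ ≤ #{T : Set X // T ∈ R ∧ T ⊆ U} := hRbound U hU

end CantorAux

namespace CantorAux

/-- (3) → (2): the absorption argument. -/
lemma three_to_two {X : Type*} [MetricSpace X] {Q : Set (Set X)}
    (hQpack : IsPacking CantorSpace Q)
    (hQ3 : ∀ U : Set X, IsOpen U → #↥U ≤ #{K : Set X // K ∈ Q ∧ K ⊆ U}) :
    ∃ P : Set (Set X),
      (∀ K ∈ P, Nonempty (↥K ≃ₜ CantorSpace)) ∧ P.PairwiseDisjoint id ∧ ⋃₀ P = Set.univ ∧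
      ∀ U : Set X, IsOpen U → #↥U ≤ #{K : Set X // K ∈ P ∧ K ⊆ U} := by
  classical
  set φ : ∀ K, K ∈ Q → (↥K ≃ₜ CantorSpace) := fun K h => (hQpack.1 K h).some with hφ
  set 𝒬 : Set (Set X) := {T | ∃ K, ∃ h : K ∈ Q, ∃ s j y, T = piece K (φ K h) s j y} with h𝒬
  have h𝒬hom : ∀ T ∈ 𝒬, Nonempty (↥T ≃ₜ CantorSpace) := by
    rintro T ⟨K, h, s, j, y, rfl⟩
    exact piece_homeo _ _ _ _ _
  have h𝒬ne : ∀ T ∈ 𝒬, T.Nonempty := by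
    rintro T ⟨K, h, s, j, y, rfl⟩
    exact piece_nonempty _ _ _ _ _
  have h𝒬dis : 𝒬.PairwiseDisjoint id := by
    rintro T ⟨K, h, s, j, y, rfl⟩ T' ⟨K', h', s', j', y', rfl⟩ hne
    rcases piece_trichotomy hQpack.2 φ h h' s s' j j' y y' with he | hd
    · exfalso
      obtain ⟨hKK, hss, hjj, hyy⟩ := he
      subst hKK; subst hss; subst hjj; subst hyy
      exact hne rfl
    · exact hd
  set D : Set X := Set.univ \ ⋃₀ 𝒬 with hD
  -- color coding
  set cIdx : ℕ × ℕ → ℕ := fun p => Nat.pair p.1 p.2 + 1 with hcIdx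
  have hcIdx_inj : Function.Injective cIdx := by
    intro p p' h
    simp only [hcIdx, add_left_inj] at h
    have := Nat.pair_eq_pair.1 h
    exact Prod.ext this.1 this.2
  have hcIdx_ne0 : ∀ p, cIdx p ≠ 0 := fun p => Nat.succ_ne_zero _
  -- request slots
  have hreq : ∀ q : ↥D × ℕ, ∃ p : ℕ × ℕ × X, (q.1 : X) ∈ fam p.1 p.2.1 p.2.2 ∧
      fam p.1 p.2.1 p.2.2 ⊆ Metric.ball (q.1 : X) ((1/2 : ℝ)^q.2) := by
    intro q
    obtain ⟨m, j, c, h1, h2⟩ := fam_base (q.1 : X) (pow_half_pos q.2)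
    exact ⟨⟨m, j, c⟩, h1, h2⟩
  choose idx hidx1 hidx2 using hreq
  -- pools
  set pool : ℕ × ℕ × X → Set (Set X) := fun p =>
    {T | (∃ K, ∃ h : K ∈ Q, ∃ s y, T = piece K (φ K h) s (cIdx (p.1, p.2.1)) y) ∧
         T ⊆ fam p.1 p.2.1 p.2.2} with hpool
  -- cardinality: each slot's requests embed into its pool
  have hle : ∀ p : ℕ × ℕ × X, #{q : ↥D × ℕ // idx q = p} ≤ #↥(pool p) := by
    intro p
    rcases isEmpty_or_nonempty {q : ↥D × ℕ // idx q = p} with hE | hNE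
    · haveI := hE
      rw [Cardinal.mk_eq_zero]
      exact zero_le
    · obtain ⟨⟨q₀, hq₀⟩⟩ := hNE
      set W : Set X := fam p.1 p.2.1 p.2.2 with hW
      have hWopen : IsOpen W := fam_isOpen _ _ _
      have hxW : (q₀.1 : X) ∈ W := by
        have h0 := hidx1 q₀
        rw [hq₀] at h0
        exact h0
      have hW3 := hQ3 W hWopen
      have hKex : ∃ K, K ∈ Q ∧ K ⊆ W := by
        rcases isEmpty_or_nonempty {K : Set X // K ∈ Q ∧ K ⊆ W} with hE2 | hNE2
        · exfalso
          haveI := hE2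
          have hz : #{K : Set X // K ∈ Q ∧ K ⊆ W} = 0 := Cardinal.mk_eq_zero _
          rw [hz, le_zero_iff, Cardinal.mk_eq_zero_iff] at hW3
          exact hW3.false ⟨_, hxW⟩
        · exact ⟨hNE2.some.1, hNE2.some.2⟩
      have hcW : continuum ≤ #↥W := by
        obtain ⟨K, hKQ, hKW⟩ := hKex
        calc continuum = #↥K := (mk_of_homeo (hQpack.1 K hKQ)).symm
          _ ≤ #↥W := Cardinal.mk_le_mk_of_subset hKW
      -- requests ≤ |W| * ℵ₀ = |W|
      have h1 : #{q : ↥D × ℕ // idx q = p} ≤ #↥W * aleph0 := by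
        have hinj : Function.Injective (fun q : {q : ↥D × ℕ // idx q = p} =>
            ((⟨(q.1.1 : X), by
              have := hidx1 q.1
              rw [q.2] at this
              exact this⟩ : ↥W), q.1.2)) := by
          rintro ⟨⟨x, n⟩, hq⟩ ⟨⟨x', n'⟩, hq'⟩ h
          simp only [Prod.mk.injEq, Subtype.mk.injEq] at h
          apply Subtype.ext
          simp only [Prod.mk.injEq]
          exact ⟨Subtype.ext h.1, h.2⟩
        have h2 := Cardinal.mk_le_of_injective hinj
        have h3 : #(↥W × ℕ) = #↥W * aleph0 := by
          simp [Cardinal.mk_prod, Cardinal.lift_id, Cardinal.lift_uzero]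
        rwa [h3] at h2
      have h2 : #↥W * aleph0 ≤ #↥W := by
        have hWinf : aleph0 ≤ #↥W := Cardinal.aleph0_le_continuum.trans hcW
        calc #↥W * aleph0 ≤ #↥W * #↥W := mul_le_mul_right (hWinf) _
          _ = #↥W := Cardinal.mul_eq_self hWinf
      have h3 : #↥W ≤ #↥(pool p) := by
        refine hW3.trans ?_
        have hsel : ∀ K : {K : Set X // K ∈ Q ∧ K ⊆ W},
            ∃ s : List Bool, ∀ j y, piece K.1 (φ K.1 K.2.1) s j y ⊆ W := by
          intro K
          apply pieces_in_open hWopen (φ K.1 K.2.1)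
          obtain ⟨z, hz⟩ := member_nonempty (hQpack.1 K.1 K.2.1)
          exact ⟨z, hz, K.2.2 hz⟩
        choose sel hselspec using hsel
        have hinj : Function.Injective (fun K : {K : Set X // K ∈ Q ∧ K ⊆ W} =>
            (⟨piece K.1 (φ K.1 K.2.1) (sel K) (cIdx (p.1, p.2.1)) (fun _ => true),
              ⟨K.1, K.2.1, sel K, fun _ => true, rfl⟩,
              hselspec K _ _⟩ : ↥(pool p))) := by
          rintro K K' h
          simp only [Subtype.mk.injEq] at h
          obtain ⟨hKK, _, _, _⟩ := piece_param_eq_global hQpack.2 φ K.2.1 K'.2.1 h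
          exact Subtype.ext hKK
        exact Cardinal.mk_le_of_injective hinj
      exact h1.trans (h2.trans h3)
  have hemb : ∀ p, Nonempty ({q : ↥D × ℕ // idx q = p} ↪ ↥(pool p)) :=
    fun p => (Cardinal.le_def _ _).1 (hle p)
  have emb : ∀ p, {q : ↥D × ℕ // idx q = p} ↪ ↥(pool p) := fun p => (hemb p).some
  set Φ : ↥D × ℕ → Set X := fun q => ((emb (idx q)) ⟨q, rfl⟩ : ↥(pool (idx q))).1 with hΦdef
  have hΦeq : ∀ (p) (q : ↥D × ℕ) (hq : idx q = p), Φ q = ((emb p) ⟨q, hq⟩ : ↥(pool p)).1 := by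
    intro p q hq
    subst hq
    rfl
  have hΦpool : ∀ q, Φ q ∈ pool (idx q) := fun q => ((emb (idx q)) ⟨q, rfl⟩).2
  have hΦ𝒬 : ∀ q, Φ q ∈ 𝒬 := by
    intro q
    obtain ⟨⟨K, h, s, y, hT⟩, _⟩ := hΦpool q
    exact ⟨K, h, s, _, y, hT⟩
  have hΦball : ∀ q, Φ q ⊆ Metric.ball (q.1 : X) ((1/2 : ℝ)^q.2) :=
    fun q => ((hΦpool q).2).trans (hidx2 q)
  have hΦinj : Function.Injective Φ := by
    intro q q' h
    by_cases hpp : idx q' = idx q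
    · have e1 : Φ q = ((emb (idx q)) ⟨q, rfl⟩ : ↥(pool (idx q))).1 := rfl
      have e2 : Φ q' = ((emb (idx q)) ⟨q', hpp⟩ : ↥(pool (idx q))).1 := hΦeq _ q' hpp
      rw [e1, e2] at h
      have := (emb (idx q)).injective (Subtype.ext h)
      exact congrArg Subtype.val this
    · exfalso
      obtain ⟨⟨K, hK, s, y, hT⟩, hsub⟩ := hΦpool q
      obtain ⟨⟨K', hK', s', y', hT'⟩, hsub'⟩ := hΦpool q'
      have hTT : piece K (φ K hK) s (cIdx ((idx q).1, (idx q).2.1)) y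
          = piece K' (φ K' hK') s' (cIdx ((idx q').1, (idx q').2.1)) y' := by
        rw [← hT, ← hT', h]
      obtain ⟨-, -, hcc, -⟩ := piece_param_eq_global hQpack.2 φ hK hK' hTT
      have hmj := hcIdx_inj hcc
      have hmj' := Prod.ext_iff.1 hmj
      have hm : (idx q).1 = (idx q').1 := hmj'.1
      have hj : (idx q).2.1 = (idx q').2.1 := hmj'.2

      have hcne : (idx q).2.2 ≠ (idx q').2.2 := by
        intro hceq
        apply hpp
        have e1 : idx q = ((idx q).1, (idx q).2.1, (idx q).2.2) := rfl
        have e2 : idx q' = ((idx q').1, (idx q').2.1, (idx q').2.2) := rfl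
        rw [e1, e2, hm, hj, hceq]
      have hsubq : Φ q ⊆ fam (idx q).1 (idx q).2.1 (idx q).2.2 := (hΦpool q).2
      have hsubq' : Φ q ⊆ fam (idx q).1 (idx q).2.1 (idx q').2.2 := by
        have h2 := (hΦpool q').2
        rw [← hm, ← hj] at h2
        rw [← h] at h2
        exact h2
      obtain ⟨w, hw⟩ := h𝒬ne _ (hΦ𝒬 q)
      exact Set.disjoint_left.1 (fam_disjoint (idx q).1 (idx q).2.1 hcne)
        (hsubq hw) (hsubq' hw)
  -- the glued absorption sets
  have hxD : ∀ x : ↥D, ∀ T ∈ 𝒬, (x : X) ∉ T := by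
    intro x T hT hxT
    exact x.2.2 ⟨T, hT, hxT⟩
  have hAhom : ∀ x : ↥D, Nonempty (↥({(x : X)} ∪ ⋃ n, Φ (x, n)) ≃ₜ CantorSpace) := by
    intro x
    apply glue (x : X) (fun n => Φ (x, n))
    · intro n
      exact h𝒬hom _ (hΦ𝒬 (x, n))
    · intro m n hmn
      apply h𝒬dis (hΦ𝒬 (x, m)) (hΦ𝒬 (x, n))
      intro heq
      have := hΦinj heq
      simp only [Prod.mk.injEq] at this
      exact hmn this.2
    · intro n
      exact hΦball (x, n)
    · intro n
      exact hxD x _ (hΦ𝒬 (x, n))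
  set A : ↥D → Set X := fun x => {(x : X)} ∪ ⋃ n, Φ (x, n) with hA
  set P : Set (Set X) := {T | ∃ x : ↥D, T = A x} ∪ {T | T ∈ 𝒬 ∧ T ∉ Set.range Φ}
    with hP
  have hmemA : ∀ (x : ↥D) (w : X), w ∈ A x ↔ (w = (x : X) ∨ ∃ n, w ∈ Φ (x, n)) := by
    intro x w
    simp [hA]
  refine ⟨P, ?_, ?_, ?_, ?_⟩
  · rintro T (⟨x, rfl⟩ | ⟨hT, -⟩)
    · exact hAhom x
    · exact h𝒬hom T hT
  · -- pairwise disjointness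
    have key : ∀ (x : ↥D) (T : Set X), T ∈ 𝒬 → T ∉ Set.range Φ → Disjoint (A x) T := by
      intro x T hT hTr
      rw [Set.disjoint_left]
      intro w hw hwT
      rcases (hmemA x w).1 hw with rfl | ⟨n, hwn⟩
      · exact hxD x T hT hwT
      · have hne : Φ (x, n) ≠ T := by
          intro heq
          exact hTr ⟨(x, n), heq⟩
        exact Set.disjoint_left.1 (h𝒬dis (hΦ𝒬 (x, n)) hT hne) hwn hwT
    have keyA : ∀ x x' : ↥D, x ≠ x' → Disjoint (A x) (A x') := by
      intro x x' hxx
      rw [Set.disjoint_left]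
      intro w hw hw'
      rcases (hmemA x w).1 hw with rfl | ⟨n, hwn⟩
      · rcases (hmemA x' _).1 hw' with heq | ⟨n', hwn'⟩
        · exact hxx (Subtype.ext heq)
        · exact hxD x _ (hΦ𝒬 (x', n')) hwn'
      · rcases (hmemA x' w).1 hw' with rfl | ⟨n', hwn'⟩
        · exact hxD x' _ (hΦ𝒬 (x, n)) hwn
        · have hne : Φ (x, n) ≠ Φ (x', n') := by
            intro heq
            have := hΦinj heq
            simp only [Prod.mk.injEq] at this
            exact hxx this.1
          exact Set.disjoint_left.1 (h𝒬dis (hΦ𝒬 (x, n)) (hΦ𝒬 (x', n')) hne) hwn hwn'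
    rintro T hTP T' hTP' hne
    rcases hTP with ⟨x, rfl⟩ | ⟨hT, hTr⟩ <;> rcases hTP' with ⟨x', rfl⟩ | ⟨hT', hTr'⟩
    · refine keyA x x' ?_
      intro heq
      exact hne (by rw [heq])
    · exact key x T' hT' hTr'
    · exact (key x' T hT hTr).symm
    · exact h𝒬dis hT hT' hne
  · -- covering
    apply Set.eq_univ_of_forall
    intro w
    by_cases hw : w ∈ ⋃₀ 𝒬
    · obtain ⟨T, hT, hwT⟩ := hw
      by_cases hr : T ∈ Set.range Φ
      · obtain ⟨q, rfl⟩ := hr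
        refine ⟨A q.1, Or.inl ⟨q.1, rfl⟩, ?_⟩
        rw [hmemA]
        right
        exact ⟨q.2, hwT⟩
      · exact ⟨T, Or.inr ⟨hT, hr⟩, hwT⟩
    · have hwD : w ∈ D := ⟨trivial, hw⟩
      refine ⟨A ⟨w, hwD⟩, Or.inl ⟨⟨w, hwD⟩, rfl⟩, ?_⟩
      rw [hmemA]
      left
      rfl
  · -- richness
    intro U hU
    refine (hQ3 U hU).trans ?_
    have hsel : ∀ K : {K : Set X // K ∈ Q ∧ K ⊆ U},
        ∃ s : List Bool, ∀ j y, piece K.1 (φ K.1 K.2.1) s j y ⊆ U := by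
      intro K
      apply pieces_in_open hU (φ K.1 K.2.1)
      obtain ⟨z, hz⟩ := member_nonempty (hQpack.1 K.1 K.2.1)
      exact ⟨z, hz, K.2.2 hz⟩
    choose sel hselspec using hsel
    have hmem : ∀ K : {K : Set X // K ∈ Q ∧ K ⊆ U},
        piece K.1 (φ K.1 K.2.1) (sel K) 0 (fun _ => true) ∈ P ∧
        piece K.1 (φ K.1 K.2.1) (sel K) 0 (fun _ => true) ⊆ U := by
      intro K
      constructor
      · right
        constructor
        · exact ⟨K.1, K.2.1, sel K, 0, fun _ => true, rfl⟩
        · rintro ⟨q, hq⟩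
          obtain ⟨⟨K', hK', s', y', hT'⟩, -⟩ := hΦpool q
          have heq : piece K' (φ K' hK') s' (cIdx ((idx q).1, (idx q).2.1)) y' =
              piece K.1 (φ K.1 K.2.1) (sel K) 0 (fun _ => true) := by
            rw [← hT', hq]
          obtain ⟨-, -, hc0, -⟩ := piece_param_eq_global hQpack.2 φ hK' K.2.1 heq
          exact hcIdx_ne0 _ hc0
      · exact hselspec K 0 _
    have hinj : Function.Injective (fun K : {K : Set X // K ∈ Q ∧ K ⊆ U} =>
        (⟨piece K.1 (φ K.1 K.2.1) (sel K) 0 (fun _ => true), hmem K⟩ :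
          {T : Set X // T ∈ P ∧ T ⊆ U})) := by
      rintro K K' h
      simp only [Subtype.mk.injEq] at h
      obtain ⟨hKK, -, -, -⟩ := piece_param_eq_global hQpack.2 φ K.2.1 K'.2.1 h
      exact Subtype.ext hKK
    exact Cardinal.mk_le_of_injective hinj

end CantorAux

theorem stmt_5 {X : Type*} [TopologicalSpace X] [MetrizableSpace X] :
    List.TFAE
      [Partitionable X CantorSpace,
       -- (2) a partition such that every open U contains |U|-many members
       ∃ P : Set (Set X),
         (∀ K ∈ P, Nonempty (K ≃ₜ CantorSpace)) ∧ P.PairwiseDisjoint id ∧ ⋃₀ P = Set.univ ∧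
         ∀ U : Set X, IsOpen U →
           Cardinal.mk U ≤ Cardinal.mk {K : Set X // K ∈ P ∧ K ⊆ U},
       -- (3) a packing such that every open U contains |U|-many members
       ∃ Q : Set (Set X), IsPacking CantorSpace Q ∧
         ∀ U : Set X, IsOpen U →
           Cardinal.mk U ≤ Cardinal.mk {K : Set X // K ∈ Q ∧ K ⊆ U},
       -- (4) a packing meeting every nonempty open set, and meeting |U|-many members
       -- whenever |U| > 𝔠
       ∃ Q : Set (Set X), IsPacking CantorSpace Q ∧
         (∀ U : Set X, IsOpen U → U.Nonempty → ∃ K ∈ Q, (K ∩ U).Nonempty) ∧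
         (∀ U : Set X, IsOpen U → Cardinal.continuum < Cardinal.mk U →
           Cardinal.mk U ≤ Cardinal.mk {K : Set X // K ∈ Q ∧ (K ∩ U).Nonempty}),
       -- (5) every open U admits a packing into U of cardinality |U|
       ∀ U : Set X, IsOpen U →
         ∃ Q : Set (Set X), IsPacking CantorSpace Q ∧ (∀ K ∈ Q, K ⊆ U) ∧
           Cardinal.mk Q = Cardinal.mk U] := by
  letI : MetricSpace X := TopologicalSpace.metrizableSpaceMetric X
  tfae_have 1 → 5 := by
    intro h1
    exact CantorAux.one_to_five h1
  tfae_have 5 → 3 := by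
    intro h5
    exact CantorAux.five_to_three h5
  tfae_have 3 → 2 := by
    rintro ⟨Q, hpack, h3⟩
    exact CantorAux.three_to_two hpack h3
  tfae_have 2 → 1 := by
    rintro ⟨P, h1, h2, h3, -⟩
    exact ⟨P, h1, h2, h3⟩
  tfae_have 2 → 3 := by
    rintro ⟨P, h1, h2, -, h4⟩
    exact ⟨P, ⟨h1, h2⟩, h4⟩
  tfae_have 3 → 4 := by
    rintro ⟨Q, hpack, h3⟩
    refine ⟨Q, hpack, ?_, ?_⟩
    · intro U hU hUne
      have h := (Cardinal.one_le_iff_ne_zero.2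
        (Cardinal.mk_ne_zero_iff.2 hUne.to_subtype)).trans (h3 U hU)
      have hne : Nonempty {K : Set X // K ∈ Q ∧ K ⊆ U} := by
        rw [← Cardinal.mk_ne_zero_iff]
        intro h0
        rw [h0] at h
        exact absurd h (by simp)
      obtain ⟨⟨K, hKQ, hKU⟩⟩ := hne
      obtain ⟨x, hx⟩ := CantorAux.member_nonempty (hpack.1 K hKQ)
      exact ⟨K, hKQ, ⟨x, hx, hKU hx⟩⟩
    · intro U hU _
      refine (h3 U hU).trans ?_
      have hinj : Function.Injective (fun K : {K : Set X // K ∈ Q ∧ K ⊆ U} =>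
          (⟨K.1, K.2.1, by
            obtain ⟨x, hx⟩ := CantorAux.member_nonempty (hpack.1 K.1 K.2.1)
            exact ⟨x, hx, K.2.2 hx⟩⟩ : {K : Set X // K ∈ Q ∧ (K ∩ U).Nonempty})) := by
        intro K K' h
        simp only [Subtype.mk.injEq] at h
        exact Subtype.ext h
      exact Cardinal.mk_le_of_injective hinj
  tfae_have 4 → 5 := by
    rintro ⟨Q, hpack, hmeet, hbig⟩
    exact CantorAux.four_to_five hpack hmeet hbig
  tfae_finish
end

section
/- If X is a metrizable space, then c(X) ≤ |X| ≤ c(X)^{ℵ₀}, where c(X) is the cellularity of X. -/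
open Cardinal Set TopologicalSpace

/-- A cellular family in `X`: a pairwise disjoint collection of nonempty open subsets. -/
def IsCellularFamily {X : Type*} [TopologicalSpace X] (S : Set (Set X)) : Prop :=
  (∀ U ∈ S, IsOpen U ∧ U.Nonempty) ∧ S.PairwiseDisjoint id

/-- The cellularity of `X`: the supremum of the cardinalities of cellular families in `X`. -/
noncomputable def cellularity (X : Type u) [TopologicalSpace X] : Cardinal.{u} :=
  ⨆ S : {S : Set (Set X) // IsCellularFamily S}, Cardinal.mk S.1

lemma mk_le_cellularity {X : Type u} [TopologicalSpace X] {S : Set (Set X)}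
    (h : IsCellularFamily S) : Cardinal.mk S ≤ cellularity X :=
  le_ciSup (f := fun S : {S : Set (Set X) // IsCellularFamily S} => Cardinal.mk S.1)
    (Cardinal.bddAbove_range _) ⟨S, h⟩

lemma cellularity_le_mk {X : Type u} [TopologicalSpace X] : cellularity X ≤ Cardinal.mk X := by
  haveI : Nonempty {S : Set (Set X) // IsCellularFamily S} :=
    ⟨⟨∅, fun U hU => absurd hU (Set.notMem_empty U), Set.pairwiseDisjoint_empty⟩⟩
  refine ciSup_le fun ⟨S, hS⟩ => ?_
  refine Cardinal.mk_le_of_injective (f := fun U => (hS.1 U.1 U.2).2.choose) ?_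
  intro U V hUV
  by_contra hne
  have hne' : U.1 ≠ V.1 := fun h => hne (Subtype.ext h)
  have hd := hS.2 U.2 V.2 hne'
  have h1 := (hS.1 U.1 U.2).2.choose_spec
  have h2 := (hS.1 V.1 V.2).2.choose_spec
  have hUV' : (hS.1 U.1 U.2).2.choose = (hS.1 V.1 V.2).2.choose := hUV
  rw [hUV'] at h1
  exact (Set.disjoint_left.1 hd h1 h2)

/-- A pairwise `ε`-separated set has cardinality at most the cellularity. -/
lemma sep_le_cellularity {X : Type u} [MetricSpace X] {M : Set X} {ε : ℝ} (hε : 0 < ε)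
    (hsep : M.Pairwise fun a b => ε ≤ dist a b) : Cardinal.mk M ≤ cellularity X := by
  have hinj : Set.InjOn (fun a => Metric.ball a (ε / 2)) M := by
    intro a ha b hb hab
    dsimp only at hab
    by_contra hne
    have hb' : b ∈ Metric.ball a (ε / 2) := by
      rw [hab]; exact Metric.mem_ball_self (by linarith)
    have hlt : dist b a < ε / 2 := Metric.mem_ball.1 hb'
    have hge : ε ≤ dist a b := hsep ha hb hne
    rw [dist_comm] at hge
    linarith
  have hcell : IsCellularFamily ((fun a => Metric.ball a (ε / 2)) '' M) := by
    constructor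
    · rintro U ⟨a, _, rfl⟩
      exact ⟨Metric.isOpen_ball, ⟨a, Metric.mem_ball_self (by linarith)⟩⟩
    · rintro U ⟨a, ha, rfl⟩ V ⟨b, hb, rfl⟩ hne
      have hab : a ≠ b := fun h => hne (by rw [h])
      exact Metric.ball_disjoint_ball (by linarith [hsep ha hb hab])
  calc Cardinal.mk M = Cardinal.mk ((fun a => Metric.ball a (ε / 2)) '' M) :=
        (Cardinal.mk_image_eq_of_injOn _ _ hinj).symm
    _ ≤ cellularity X := mk_le_cellularity hcell

/-- Existence of a maximal `ε`-separated set. -/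
lemma exists_maximal_sep (X : Type u) [MetricSpace X] {ε : ℝ} (hε : 0 < ε) :
    ∃ M : Set X, (M.Pairwise fun a b => ε ≤ dist a b) ∧ ∀ x : X, ∃ a ∈ M, dist x a < ε := by
  obtain ⟨M, -, hM⟩ := zorn_subset_nonempty {A : Set X | A.Pairwise fun a b => ε ≤ dist a b}
    (fun c hc hchain _ => ⟨⋃₀ c, by
      intro a ⟨s, hs, has⟩ b ⟨t, ht, hbt⟩ hab
      rcases hchain.total hs ht with hst | hts
      · exact hc ht (hst has) hbt hab
      · exact hc hs has (hts hbt) hab, fun s hs => Set.subset_sUnion_of_mem hs⟩)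
    ∅ (Set.pairwise_empty _)
  refine ⟨M, hM.1, fun x => ?_⟩
  by_contra hx
  push_neg at hx
  have hxM : x ∉ M := fun h => absurd (Metric.mem_ball_self hε : dist x x < ε) (not_lt.2 (hx x h))
  have hins : (insert x M) ∈ {A : Set X | A.Pairwise fun a b => ε ≤ dist a b} := by
    refine hM.1.insert fun b hb _ => ⟨hx b hb, ?_⟩
    rw [dist_comm]; exact hx b hb
  exact hxM (hM.2 hins (Set.subset_insert x M) (Set.mem_insert x M))

lemma aleph0_le_cellularity_of_infinite {X : Type u} [MetricSpace X] [Infinite X] :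
    Cardinal.aleph0 ≤ cellularity X := by
  classical
  rw [Cardinal.aleph0_le]
  intro n
  set e := Infinite.natEmbedding X
  set s : Finset X := (Finset.range n).image e
  have hcard : s.card = n := by
    rw [Finset.card_image_of_injective _ e.injective, Finset.card_range]
  by_cases hd : s.offDiag.Nonempty
  · set r : ℝ := (s.offDiag.image fun p => dist p.1 p.2).min' (hd.image _)
    have hr : 0 < r := by
      obtain ⟨p, hp, hpr⟩ := Finset.mem_image.1 ((s.offDiag.image fun p => dist p.1 p.2).min'_mem
        (hd.image _))
      have hpr' : dist p.1 p.2 = r := hpr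
      rw [← hpr']
      exact dist_pos.2 (Finset.mem_offDiag.1 hp).2.2
    have hsep : (↑s : Set X).Pairwise fun a b => r ≤ dist a b := by
      intro a ha b hb hab
      exact Finset.min'_le _ _ (Finset.mem_image.2 ⟨(a, b),
        Finset.mem_offDiag.2 ⟨ha, hb, hab⟩, rfl⟩)
    calc (n : Cardinal) = Cardinal.mk (↑s : Set X) := by
          simp only [Finset.coe_sort_coe, Cardinal.mk_coe_finset, hcard]
      _ ≤ cellularity X := sep_le_cellularity hr hsep
  · -- s has at most one element, so n ≤ 1
    have h1 : s.card ≤ 1 := by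
      by_contra h
      push_neg at h
      obtain ⟨a, ha, b, hb, hab⟩ := Finset.one_lt_card.1 h
      exact hd ⟨(a, b), Finset.mem_offDiag.2 ⟨ha, hb, hab⟩⟩
    have hn : n ≤ 1 := hcard ▸ h1
    have : (1 : Cardinal) ≤ cellularity X := by
      have : IsCellularFamily ({Set.univ} : Set (Set X)) := by
        constructor
        · rintro U rfl
          exact ⟨isOpen_univ, Set.univ_nonempty⟩
        · exact Set.pairwiseDisjoint_singleton _ _
      simpa using mk_le_cellularity this
    calc (n : Cardinal) ≤ (1 : ℕ) := by exact_mod_cast Nat.cast_le.2 hn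
      _ ≤ cellularity X := by simpa using this

lemma mk_le_cellularity_pow_of_infinite {X : Type u} [MetricSpace X] [Infinite X] :
    Cardinal.mk X ≤ (cellularity X) ^ Cardinal.aleph0 := by
  have hc : Cardinal.aleph0 ≤ cellularity X := aleph0_le_cellularity_of_infinite
  have hpos : ∀ n : ℕ, (0 : ℝ) < 1 / (n + 1) := fun n => by positivity
  choose M hMsep hMnear using fun n : ℕ => exists_maximal_sep X (hpos n)
  choose f hf1 hf2 using fun (x : X) (n : ℕ) => hMnear n x
  set A : Set X := ⋃ n : ULift.{u} ℕ, M n.down with hA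
  have hAle : Cardinal.mk A ≤ cellularity X := by
    calc Cardinal.mk A ≤ Cardinal.mk (ULift.{u} ℕ) * ⨆ n : ULift.{u} ℕ, Cardinal.mk (M n.down) :=
          Cardinal.mk_iUnion_le _
      _ ≤ Cardinal.aleph0 * cellularity X := by
          refine mul_le_mul' (by simp) (ciSup_le fun n => ?_)
          exact sep_le_cellularity (hpos n.down) (hMsep n.down)
      _ ≤ cellularity X * cellularity X := mul_le_mul_left hc _
      _ = cellularity X := Cardinal.mul_eq_self hc
  have hginj : Function.Injective (fun (x : X) (n : ULift.{u} ℕ) =>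
      (⟨f x n.down, Set.mem_iUnion.2 ⟨n, hf1 x n.down⟩⟩ : A)) := by
    intro x y hxy
    refine eq_of_forall_dist_le fun ε hε => ?_
    obtain ⟨n, hn⟩ := exists_nat_one_div_lt (half_pos hε)
    have hfn : f x n = f y n := by
      have := congrFun hxy (ULift.up n)
      exact Subtype.ext_iff.1 this
    have h1 := hf2 x n
    have h2 := hf2 y n
    rw [hfn] at h1
    calc dist x y ≤ dist x (f y n) + dist (f y n) y := dist_triangle _ _ _
      _ = dist x (f y n) + dist y (f y n) := by rw [dist_comm (f y n) y]
      _ ≤ 1 / (n + 1) + 1 / (n + 1) := add_le_add h1.le h2.le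
      _ ≤ ε := by linarith
  calc Cardinal.mk X ≤ Cardinal.mk (ULift.{u} ℕ → A) := Cardinal.mk_le_of_injective hginj
    _ = Cardinal.mk A ^ Cardinal.mk (ULift.{u} ℕ) := (Cardinal.power_def _ _).symm
    _ = Cardinal.mk A ^ Cardinal.aleph0 := by simp
    _ ≤ (cellularity X) ^ Cardinal.aleph0 := Cardinal.power_le_power_right hAle

theorem stmt_6 {X : Type u} [TopologicalSpace X] [MetrizableSpace X] :
    cellularity X ≤ Cardinal.mk X ∧ Cardinal.mk X ≤ (cellularity X) ^ Cardinal.aleph0 := by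
  refine ⟨cellularity_le_mk, ?_⟩
  letI : MetricSpace X := TopologicalSpace.metrizableSpaceMetric X
  rcases finite_or_infinite X with hfin | hinf
  · -- finite: discrete topology, singletons form a cellular family
    haveI : DiscreteTopology X := Finite.instDiscreteTopology
    have hcell : IsCellularFamily (Set.range fun x : X => ({x} : Set X)) := by
      constructor
      · rintro U ⟨x, rfl⟩
        exact ⟨isOpen_discrete _, ⟨x, rfl⟩⟩
      · rintro U ⟨x, rfl⟩ V ⟨y, rfl⟩ hne
        have hxy : x ≠ y := fun h => hne (by rw [h])
        simp only [Function.onFun, id_eq, Set.disjoint_singleton]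
        exact hxy
    have hXle : Cardinal.mk X ≤ cellularity X := by
      have := mk_le_cellularity hcell
      rwa [Cardinal.mk_range_eq _ Set.singleton_injective] at this
    by_cases hc : cellularity X = 0
    · rw [hc] at hXle
      exact le_trans hXle zero_le
    · calc Cardinal.mk X ≤ cellularity X := hXle
        _ = cellularity X ^ (1 : Cardinal) := (Cardinal.power_one _).symm
        _ ≤ cellularity X ^ Cardinal.aleph0 :=
            Cardinal.power_le_power_left hc Cardinal.one_le_aleph0
  · exact mk_le_cellularity_pow_of_infinite
end

section
/- If X is a metrizable space that is 2^ω-coverable and |X| ≤ 𝔠^{+ω}, then there is a packing of Cantor spaces into X of cardinality |X|. -/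
open Cardinal Set TopologicalSpace

/-- `𝔠^{+ω}`, the least limit cardinal above `𝔠`: the supremum of the finitely iterated
cardinal successors of `𝔠`. -/
noncomputable def contSuccOmega : Cardinal.{u} :=
  ⨆ n : ℕ, (Order.succ)^[n] Cardinal.continuum

namespace StmtAux

open Topology Metric Ordinal

universe u v

/-! ### Cantor space basics -/

lemma mk_cantorSpace : #CantorSpace = Cardinal.continuum := by
  rw [show CantorSpace = (ℕ → Bool) from rfl, ← Cardinal.power_def, Cardinal.mk_bool,
    Cardinal.mk_nat, Cardinal.two_power_aleph0]

/-- basic cylinder around `y` -/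
def cyl (y : CantorSpace) (n : ℕ) : Set CantorSpace := {x | ∀ i < n, x i = y i}

lemma self_mem_cyl (y : CantorSpace) (n : ℕ) : y ∈ cyl y n := fun _ _ => rfl

lemma exists_cyl_subset {y : CantorSpace} {V : Set CantorSpace} (hV : V ∈ 𝓝 y) :
    ∃ n, cyl y n ⊆ V := by
  rw [nhds_pi, Filter.mem_pi] at hV
  obtain ⟨I, hIfin, t, ht, hsub⟩ := hV
  obtain ⟨b, hb⟩ := hIfin.bddAbove
  refine ⟨b + 1, fun x hx => hsub fun i hi => ?_⟩
  have hib : i < b + 1 := Nat.lt_succ_of_le (hb hi)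
  have hxy : x i = y i := hx i hib
  rw [hxy]
  have := ht i
  rwa [mem_nhds_discrete] at this

noncomputable def cylHomeo (y : CantorSpace) (n : ℕ) : (cyl y n) ≃ₜ CantorSpace where
  toFun x k := x.1 (k + n)
  invFun c := ⟨fun i => if h : i < n then y i else c (i - n), fun i hi => dif_pos hi⟩
  left_inv x := by
    apply Subtype.ext; funext i
    show (if h : i < n then y i else x.1 (i - n + n)) = x.1 i
    by_cases h : i < n
    · rw [dif_pos h]; exact (x.2 i h).symm
    · rw [dif_neg h, Nat.sub_add_cancel (by omega)]
  right_inv c := by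
    funext k
    show (if h : k + n < n then y (k + n) else c (k + n - n)) = c k
    rw [dif_neg (by omega : ¬ (k + n < n)), show k + n - n = k from by omega]
  continuous_toFun := by
    apply continuous_pi; intro k
    exact (continuous_apply (k + n)).comp continuous_subtype_val
  continuous_invFun := by
    apply Continuous.subtype_mk
    apply continuous_pi; intro i
    by_cases h : i < n
    · simpa only [dif_pos h] using continuous_const
    · simpa only [dif_neg h] using continuous_apply (i - n)

def evenSet (b : CantorSpace) : Set CantorSpace := {x | ∀ n, x (2 * n) = b n}

noncomputable def evenHomeo (b : CantorSpace) : (evenSet b) ≃ₜ CantorSpace where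
  toFun x k := x.1 (2 * k + 1)
  invFun c := ⟨fun i => if i % 2 = 0 then b (i / 2) else c (i / 2), by
    intro n
    show (if (2 * n) % 2 = 0 then b ((2 * n) / 2) else c ((2 * n) / 2)) = b n
    rw [if_pos (by omega : (2 * n) % 2 = 0), show 2 * n / 2 = n from by omega]⟩
  left_inv x := by
    apply Subtype.ext; funext i
    show (if i % 2 = 0 then b (i / 2) else x.1 (2 * (i / 2) + 1)) = x.1 i
    by_cases h : i % 2 = 0
    · rw [if_pos h, ← x.2 (i / 2), show 2 * (i / 2) = i from by omega]
    · rw [if_neg h, show 2 * (i / 2) + 1 = i from by omega]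
  right_inv c := by
    funext k
    show (if (2 * k + 1) % 2 = 0 then b ((2 * k + 1) / 2) else c ((2 * k + 1) / 2)) = c k
    rw [if_neg (by omega : ¬ ((2 * k + 1) % 2 = 0)), show (2 * k + 1) / 2 = k from by omega]
  continuous_toFun := by
    apply continuous_pi; intro k
    exact (continuous_apply (2 * k + 1)).comp continuous_subtype_val
  continuous_invFun := by
    apply Continuous.subtype_mk
    apply continuous_pi; intro i
    by_cases h : i % 2 = 0
    · simpa only [if_pos h] using continuous_const
    · simpa only [if_neg h] using continuous_apply (i / 2)

lemma evenSet_disjoint {b b' : CantorSpace} (h : b ≠ b') :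
    Disjoint (evenSet b) (evenSet b') := by
  rw [Set.disjoint_left]
  intro x hx hx'
  exact h (funext fun n => (hx n).symm.trans (hx' n))

/-! ### Transport of homeomorphisms to subsets -/

noncomputable def imageValHomeo {X : Type v} [TopologicalSpace X] {K : Set X} (A : Set K) :
    (A : Set K) ≃ₜ (Subtype.val '' A : Set X) :=
  (Topology.IsEmbedding.toHomeomorph (f := Subtype.val ∘ Subtype.val)
      (Topology.IsEmbedding.subtypeVal.comp Topology.IsEmbedding.subtypeVal)).trans
    (Homeomorph.setCongr (by
      ext x
      constructor
      · rintro ⟨a, rfl⟩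
        exact ⟨a.1, a.2, rfl⟩
      · rintro ⟨k, hk, rfl⟩
        exact ⟨⟨k, hk⟩, rfl⟩))

variable {X : Type u} [TopologicalSpace X]

noncomputable def transportHomeo {K : Set X} (e : K ≃ₜ CantorSpace) (S0 : Set CantorSpace) :
    (Subtype.val '' (e ⁻¹' S0) : Set X) ≃ₜ S0 :=
  (imageValHomeo _).symm.trans ((e.image _).trans
    (Homeomorph.setCongr (Set.image_preimage_eq S0 e.surjective)))

lemma cantor_in_nhd {K : Set X} (e : K ≃ₜ CantorSpace) {a : X} (ha : a ∈ K)
    {U : Set X} (hU : IsOpen U) (haU : a ∈ U) :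
    ∃ S : Set X, S ⊆ U ∧ a ∈ S ∧ Nonempty ((S : Set X) ≃ₜ CantorSpace) := by
  set a' : K := ⟨a, ha⟩ with ha'
  set y := e a' with hy
  have hVopen : IsOpen {c : CantorSpace | (e.symm c : X) ∈ U} :=
    (continuous_subtype_val.comp e.symm.continuous).isOpen_preimage U hU
  have hyV : y ∈ {c : CantorSpace | (e.symm c : X) ∈ U} := by
    simp only [Set.mem_setOf_eq, hy, Homeomorph.symm_apply_apply]
    exact haU
  obtain ⟨n, hn⟩ := exists_cyl_subset (hVopen.mem_nhds hyV)
  refine ⟨Subtype.val '' (e ⁻¹' cyl y n), ?_, ?_, ?_⟩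
  · rintro - ⟨k, hk, rfl⟩
    have := hn hk
    simpa only [Set.mem_setOf_eq, Homeomorph.symm_apply_apply] using this
  · exact ⟨a', self_mem_cyl y n, rfl⟩
  · exact ⟨(transportHomeo e (cyl y n)).trans (cylHomeo y n)⟩

lemma mk_eq_continuum_of_homeo {S : Set X} (h : Nonempty ((S : Set X) ≃ₜ CantorSpace)) :
    Cardinal.mk S = Cardinal.continuum := by
  obtain ⟨e⟩ := h
  have h1 := Cardinal.lift_mk_eq'.mpr ⟨e.toEquiv⟩
  rw [mk_cantorSpace, Cardinal.lift_continuum] at h1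
  simpa using h1

lemma nonempty_of_homeo {S : Set X} (h : Nonempty ((S : Set X) ≃ₜ CantorSpace)) :
    S.Nonempty := by
  obtain ⟨e⟩ := h
  exact ⟨(e.symm (fun _ => false)).1, (e.symm (fun _ => false)).2⟩

/-! ### Cardinal arithmetic: the Hausdorff formula and its consequences -/

lemma hausdorff_step {ν : Cardinal.{v}} (hν : ℵ₀ ≤ ν) (h : ν ^ (ℵ₀ : Cardinal.{v}) = ν) :
    (Order.succ ν) ^ (ℵ₀ : Cardinal.{v}) = Order.succ ν := by
  set κ := Order.succ ν with hκdef
  have hκν : ν < κ := Order.lt_succ ν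
  have hκ0 : ℵ₀ ≤ κ := hν.trans hκν.le
  have hreg : Cardinal.IsRegular κ := Cardinal.isRegular_succ hν
  refine le_antisymm ?_ (Cardinal.self_le_power _ Cardinal.one_le_aleph0)
  set A := Quotient.out κ with hAdef
  have hmkA : #A = κ := Cardinal.mk_out κ
  obtain ⟨r, wo, hr⟩ := Cardinal.ord_eq A
  rw [hmkA] at hr
  have hpow : κ ^ (ℵ₀ : Cardinal.{v}) = #(ULift.{v} ℕ → A) := by
    rw [← Cardinal.power_def, hmkA, Cardinal.mk_uLift, Cardinal.mk_nat, Cardinal.lift_aleph0]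
  rw [hpow]
  have hbound : ∀ f : ULift.{v} ℕ → A, ∃ b : A, ∀ n, ¬ r b (f n) := by
    intro f
    have hsup : (⨆ n : ULift.{v} ℕ, Ordinal.typein r (f n)) < Ordinal.type r := by
      rw [← hr]
      apply Ordinal.iSup_lt_ord
      · rw [Cardinal.mk_uLift, Cardinal.mk_nat, Cardinal.lift_aleph0, hreg.cof_eq]
        exact hν.trans_lt hκν
      · intro n
        rw [hr]
        exact Ordinal.typein_lt_type _ _
    obtain ⟨b, hb⟩ := Ordinal.typein_surj r hsup
    refine ⟨b, fun n => ?_⟩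
    have h1 : Ordinal.typein r (f n) ≤ Ordinal.typein r b := by
      rw [hb]; exact Ordinal.le_iSup (fun n : ULift.{v} ℕ => Ordinal.typein r (f n)) n
    exact (Ordinal.typein_le_typein r).mp h1
  have hcover : (⋃ b : A, {f : ULift.{v} ℕ → A | ∀ n, ¬ r b (f n)}) = Set.univ := by
    ext f
    simp only [Set.mem_iUnion, Set.mem_setOf_eq, Set.mem_univ, iff_true]
    exact hbound f
  have hIic : ∀ b : A, #({a : A | ¬ r b a}) ≤ ν := by
    intro b
    have htri : ({a : A | ¬ r b a}) = insert b {a : A | r a b} := by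
      ext a
      simp only [Set.mem_setOf_eq, Set.mem_insert_iff]
      constructor
      · intro hnr
        rcases trichotomous_of r a b with h' | h' | h'
        · exact Or.inr h'
        · exact Or.inl h'
        · exact absurd h' hnr
      · rintro (rfl | h')
        · exact irrefl_of r a
        · intro h''
          exact asymm_of r h' h''
    have hcard : #({a : A | r a b}) ≤ ν := by
      have h1 : #{y // r y b} = (Ordinal.typein r b).card := (Ordinal.card_typein b).symm
      have h2 : (Ordinal.typein r b).card < κ := by
        rw [← hmkA]
        exact Cardinal.card_typein_lt (r := r) b (by rw [hmkA, hr])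
      have h3 : #({a : A | r a b}) = #{y // r y b} := rfl
      rw [h3, h1]
      exact Order.lt_succ_iff.mp (hκdef ▸ h2)
    calc #({a : A | ¬ r b a}) = #(insert b {a : A | r a b} : Set A) := by rw [htri]
      _ ≤ #({a : A | r a b}) + 1 := Cardinal.mk_insert_le
      _ ≤ ν + 1 := by gcongr
      _ = ν := Cardinal.add_one_eq hν
  calc #(ULift.{v} ℕ → A) = #(⋃ b : A, {f : ULift.{v} ℕ → A | ∀ n, ¬ r b (f n)}) := by
        rw [hcover, Cardinal.mk_univ]
    _ ≤ Cardinal.sum (fun b : A => #({f : ULift.{v} ℕ → A | ∀ n, ¬ r b (f n)})) :=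
        Cardinal.mk_iUnion_le_sum_mk
    _ ≤ Cardinal.sum (fun _ : A => ν) := by
        apply Cardinal.sum_le_sum
        intro b
        have hinj : Function.Injective
            (fun (F : {f : ULift.{v} ℕ → A | ∀ n, ¬ r b (f n)}) (n : ULift.{v} ℕ) =>
              (⟨F.1 n, F.2 n⟩ : {a : A | ¬ r b a})) := by
          intro F G hFG
          apply Subtype.ext
          funext n
          exact Subtype.ext_iff.mp (congrFun hFG n)
        calc #({f : ULift.{v} ℕ → A | ∀ n, ¬ r b (f n)})
            ≤ #(ULift.{v} ℕ → {a : A | ¬ r b a}) := Cardinal.mk_le_of_injective hinj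
          _ = #({a : A | ¬ r b a}) ^ (ℵ₀ : Cardinal.{v}) := by
              rw [← Cardinal.power_def, Cardinal.mk_uLift, Cardinal.mk_nat, Cardinal.lift_aleph0]
          _ ≤ ν ^ (ℵ₀ : Cardinal.{v}) := Cardinal.power_le_power_right (hIic b)
          _ = ν := h
    _ = κ * ν := by rw [Cardinal.sum_const', hmkA]
    _ = κ := by rw [Cardinal.mul_eq_max hκ0 hν, max_eq_left hκν.le]

lemma iter_succ_continuum_aleph0_le (m : ℕ) :
    ℵ₀ ≤ (Order.succ)^[m] (Cardinal.continuum : Cardinal.{v}) := by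
  induction m with
  | zero => exact Cardinal.aleph0_le_continuum
  | succ m ih =>
      rw [Function.iterate_succ_apply']
      exact ih.trans (Order.le_succ _)

lemma iter_succ_continuum_pow (m : ℕ) :
    ((Order.succ)^[m] (Cardinal.continuum : Cardinal.{v})) ^ (ℵ₀ : Cardinal.{v}) =
      (Order.succ)^[m] (Cardinal.continuum : Cardinal.{v}) := by
  induction m with
  | zero =>
      simp only [Function.iterate_zero, id_eq]
      rw [← Cardinal.two_power_aleph0, ← Cardinal.power_mul, Cardinal.aleph0_mul_aleph0]
  | succ m ih =>
      rw [Function.iterate_succ_apply']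
      exact hausdorff_step (iter_succ_continuum_aleph0_le m) ih

lemma pow_aleph0_lt {κ ν : Cardinal.{v}} (hc : Cardinal.continuum < κ)
    (hκ : κ ≤ contSuccOmega.{v}) (hν : ν < κ) : ν ^ (ℵ₀ : Cardinal.{v}) < κ := by
  by_cases hcase : ∃ m, κ ≤ (Order.succ)^[m] (Cardinal.continuum : Cardinal.{v})
  · have hm : κ ≤ (Order.succ)^[Nat.find hcase] Cardinal.continuum := Nat.find_spec hcase
    have hm0 : Nat.find hcase ≠ 0 := by
      intro h0
      rw [h0] at hm
      simp only [Function.iterate_zero, id_eq] at hm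
      exact absurd hm (not_le.mpr hc)
    obtain ⟨m', hm'⟩ := Nat.exists_eq_succ_of_ne_zero hm0
    rw [hm', Function.iterate_succ_apply'] at hm
    have hlt : (Order.succ)^[m'] (Cardinal.continuum : Cardinal.{v}) < κ :=
      not_le.mp (Nat.find_min hcase (by omega))
    have hν' : ν ≤ (Order.succ)^[m'] (Cardinal.continuum : Cardinal.{v}) :=
      Order.lt_succ_iff.mp (hν.trans_le hm)
    calc ν ^ (ℵ₀ : Cardinal.{v}) ≤ ((Order.succ)^[m'] Cardinal.continuum) ^ (ℵ₀ : Cardinal.{v}) :=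
          Cardinal.power_le_power_right hν'
      _ = (Order.succ)^[m'] Cardinal.continuum := iter_succ_continuum_pow m'
      _ < κ := hlt
  · push_neg at hcase
    have hνm : ∃ m, ν < (Order.succ)^[m] (Cardinal.continuum : Cardinal.{v}) := by
      have h1 : ν < contSuccOmega.{v} := hν.trans_le hκ
      rwa [contSuccOmega, lt_ciSup_iff (Cardinal.bddAbove_range _)] at h1
    obtain ⟨m, hνm⟩ := hνm
    calc ν ^ (ℵ₀ : Cardinal.{v}) ≤ ((Order.succ)^[m] Cardinal.continuum) ^ (ℵ₀ : Cardinal.{v}) :=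
          Cardinal.power_le_power_right hνm.le
      _ = (Order.succ)^[m] Cardinal.continuum := iter_succ_continuum_pow m
      _ < κ := hcase m

/-! ### Metric space tools -/

lemma exists_maximal_separated {Y : Type v} [MetricSpace Y] (ε : ℝ) (hε : 0 < ε) :
    ∃ A : Set Y, (∀ a ∈ A, ∀ b ∈ A, a ≠ b → ε ≤ dist a b) ∧
      ∀ x : Y, ∃ a ∈ A, dist x a < ε := by
  set S : Set (Set Y) := {A | ∀ a ∈ A, ∀ b ∈ A, a ≠ b → ε ≤ dist a b} with hS
  obtain ⟨m, hm⟩ := zorn_subset S (by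
    intro c hcS hchain
    refine ⟨⋃₀ c, ?_, fun s hs => subset_sUnion_of_mem hs⟩
    intro a ha b hb hab
    obtain ⟨s, hs, has⟩ := ha
    obtain ⟨t, ht, hbt⟩ := hb
    rcases hchain.total hs ht with h | h
    · exact hcS ht a (h has) b hbt hab
    · exact hcS hs a has b (h hbt) hab)
  refine ⟨m, hm.1, fun x => ?_⟩
  by_contra hcon
  push_neg at hcon
  have hxm : x ∉ m := fun hx => absurd (hcon x hx) (by
    rw [dist_self]
    exact not_le.mpr hε)
  have hins : insert x m ∈ S := by
    intro a ha b hb hab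
    rcases ha with rfl | ha
    · rcases hb with rfl | hb
      · exact absurd rfl hab
      · exact hcon b hb
    · rcases hb with rfl | hb
      · rw [dist_comm]
        exact hcon a ha
      · exact hm.1 a ha b hb hab
  have hsub : insert x m ⊆ m := hm.2 hins (Set.subset_insert x m)
  exact hxm (hsub (Set.mem_insert x m))

lemma mk_le_dense_pow {Y : Type v} [MetricSpace Y] {D : Set Y} (hD : Dense D) [Nonempty Y] :
    Cardinal.mk Y ≤ #D ^ (ℵ₀ : Cardinal.{v}) := by
  have hne : Nonempty D := (hD.nonempty).to_subtype
  have hseq : ∀ x : Y, ∃ u : ℕ → Y, (∀ n, u n ∈ D) ∧ Filter.Tendsto u Filter.atTop (nhds x) :=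
    fun x => mem_closure_iff_seq_limit.mp (hD x)
  set F : Y → (ULift.{v} ℕ → D) :=
    fun x n => ⟨(hseq x).choose n.down, (hseq x).choose_spec.1 n.down⟩ with hF
  have hinj : Function.Injective F := by
    intro x y hxy
    have h1 : (hseq x).choose = (hseq y).choose := by
      funext n
      exact Subtype.ext_iff.mp (congrFun hxy ⟨n⟩)
    exact tendsto_nhds_unique ((hseq x).choose_spec.2) (h1 ▸ (hseq y).choose_spec.2)
  calc #Y ≤ #(ULift.{v} ℕ → D) := Cardinal.mk_le_of_injective hinj
    _ = #D ^ (ℵ₀ : Cardinal.{v}) := by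
      rw [← Cardinal.power_def, Cardinal.mk_uLift, Cardinal.mk_nat, Cardinal.lift_aleph0]

/-- the recursively disjointified family -/
noncomputable def Bfam {Y : Type v} [MetricSpace Y] (A : ℕ → Set Y) (G : ℕ → Y → Set Y) :
    ℕ → Set Y
  | n => {a ∈ A n | ∀ m, m < n → ∀ b ∈ Bfam A G m,
      Disjoint (ball a (1 / (3 * (n + 1)))) (G m b)}

lemma mem_Bfam {Y : Type v} [MetricSpace Y] {A : ℕ → Set Y} {G : ℕ → Y → Set Y} {n : ℕ} {a : Y} :
    a ∈ Bfam A G n ↔ a ∈ A n ∧ ∀ m, m < n → ∀ b ∈ Bfam A G m,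
      Disjoint (ball a (1 / (3 * (n + 1)))) (G m b) := by
  conv_lhs => rw [Bfam]
  rfl

end StmtAux

open Metric

theorem stmt_8 {X : Type u} [TopologicalSpace X] [MetrizableSpace X]
    (hcov : Coverable X CantorSpace) (hX : Cardinal.mk X ≤ contSuccOmega) :
    ∃ Q : Set (Set X), IsPacking CantorSpace Q ∧ Cardinal.mk Q = Cardinal.mk X := by
  classical
  obtain ⟨C, hC, hCcov⟩ := hcov
  have hcover : ∀ x : X, ∃ K, K ∈ C ∧ x ∈ K := by
    intro x
    have hx : x ∈ ⋃₀ C := by rw [hCcov]; exact Set.mem_univ x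
    obtain ⟨K, hK, hxK⟩ := hx
    exact ⟨K, hK, hxK⟩
  rcases isEmpty_or_nonempty X with hemp | hne
  · refine ⟨∅, ⟨fun K hK => absurd hK (Set.notMem_empty K), Set.pairwiseDisjoint_empty⟩, ?_⟩
    rw [Cardinal.mk_emptyCollection, eq_comm, Cardinal.mk_eq_zero_iff]
    exact hemp
  · haveI : Nonempty X := hne
    obtain ⟨x0⟩ := hne
    obtain ⟨K0, hK0C, hx0K0⟩ := hcover x0
    obtain ⟨e0⟩ := hC K0 hK0C
    have hcge : Cardinal.continuum ≤ #X := by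
      rw [← StmtAux.mk_eq_continuum_of_homeo ⟨e0⟩]
      exact Cardinal.mk_set_le K0
    rcases le_or_gt (#X) Cardinal.continuum with hle | hgt
    · -- Case `|X| = 𝔠`: pack continuum many Cantor sets inside `K0`.
      have hXc : #X = Cardinal.continuum := le_antisymm hle hcge
      set f : CantorSpace → Set X :=
        fun b => (Subtype.val '' (e0 ⁻¹' StmtAux.evenSet b) : Set X) with hf
      have hfhomeo : ∀ b, Nonempty ((f b : Set X) ≃ₜ CantorSpace) :=
        fun b => ⟨(StmtAux.transportHomeo e0 _).trans (StmtAux.evenHomeo b)⟩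
      have hfne : ∀ b, (f b).Nonempty := fun b => StmtAux.nonempty_of_homeo (hfhomeo b)
      have hfdisj : ∀ b b', b ≠ b' → Disjoint (f b) (f b') := by
        intro b b' hbb'
        apply Set.disjoint_image_of_injective Subtype.val_injective
        exact Disjoint.preimage _ (StmtAux.evenSet_disjoint hbb')
      have hfinj : Function.Injective f := by
        intro b b' hbb'
        by_contra hne'
        obtain ⟨x, hx⟩ := hfne b
        exact Set.disjoint_left.mp (hfdisj b b' hne') hx (hbb' ▸ hx)
      refine ⟨Set.range f, ⟨?_, ?_⟩, ?_⟩
      · rintro K ⟨b, rfl⟩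
        exact hfhomeo b
      · rintro K ⟨b, rfl⟩ K' ⟨b', rfl⟩ hKK'
        exact hfdisj b b' fun h => hKK' (by rw [h])
      · have h1 : Cardinal.lift.{0} #(Set.range f) = Cardinal.lift.{u} #CantorSpace :=
          Cardinal.mk_range_eq_of_injective hfinj
        rw [StmtAux.mk_cantorSpace, Cardinal.lift_continuum] at h1
        rw [hXc]
        simpa using h1
    · -- Case `|X| > 𝔠`.
      letI : MetricSpace X := TopologicalSpace.metrizableSpaceMetric X
      have hEx : ∀ n : ℕ, ∃ A : Set X,
          (∀ a ∈ A, ∀ b ∈ A, a ≠ b → 1 / ((n : ℝ) + 1) ≤ dist a b) ∧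
          ∀ x : X, ∃ a ∈ A, dist x a < 1 / ((n : ℝ) + 1) :=
        fun n => StmtAux.exists_maximal_separated _ (by positivity)
      choose A hA1 hA2 using hEx
      set D : Set X := ⋃ n : ULift.{u} ℕ, A n.down with hD
      have hDdense : Dense D := by
        apply Metric.dense_iff.mpr
        intro x r hr
        obtain ⟨n, hn⟩ := exists_nat_one_div_lt hr
        obtain ⟨a, haA, hax⟩ := hA2 n x
        refine ⟨a, ?_, Set.mem_iUnion.mpr ⟨⟨n⟩, haA⟩⟩
        rw [mem_ball, dist_comm]
        exact hax.trans hn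
      have hκD : #X ≤ #D := by
        by_contra hcon
        push_neg at hcon
        have h1 : #X ≤ #D ^ (ℵ₀ : Cardinal.{u}) := StmtAux.mk_le_dense_pow hDdense
        exact absurd h1 (not_le.mpr (StmtAux.pow_aleph0_lt hgt hX hcon))
      have hGex : ∀ (n : ℕ) (a : X), ∃ S : Set X,
          S ⊆ ball a (1 / (3 * ((n : ℝ) + 1))) ∧ a ∈ S ∧
          Nonempty ((S : Set X) ≃ₜ CantorSpace) := by
        intro n a
        obtain ⟨K, hKC, haK⟩ := hcover a
        obtain ⟨e⟩ := hC K hKC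
        exact StmtAux.cantor_in_nhd e haK isOpen_ball (mem_ball_self (by positivity))
      choose G hG1 hG2 hG3 using hGex
      set B : ℕ → Set X := StmtAux.Bfam A G with hB
      have hBsub : ∀ n, B n ⊆ A n := fun n a ha => (StmtAux.mem_Bfam.mp ha).1
      have hBdisj : ∀ n, ∀ a ∈ B n, ∀ m, m < n → ∀ b ∈ B m,
          Disjoint (ball a (1 / (3 * ((n : ℝ) + 1)))) (G m b) :=
        fun n a ha => (StmtAux.mem_Bfam.mp ha).2
      -- the chosen Cantor sets are pairwise disjoint
      have key : ∀ n m : ℕ, ∀ a ∈ B n, ∀ b ∈ B m, (n ≠ m ∨ a ≠ b) →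
          Disjoint (G n a) (G m b) := by
        intro n m a ha b hb hne'
        rcases lt_trichotomy n m with h | rfl | h
        · exact (Disjoint.mono_left (hG1 m b) (hBdisj m b hb n h a ha)).symm
        · have hab : a ≠ b := hne'.resolve_left fun h => h rfl
          have hsep : 1 / ((n : ℝ) + 1) ≤ dist a b :=
            hA1 n a (hBsub n ha) b (hBsub n hb) hab
          have hballs : Disjoint (ball a (1 / (3 * ((n : ℝ) + 1))))
              (ball b (1 / (3 * ((n : ℝ) + 1)))) := by
            rw [Set.disjoint_left]
            intro p hpa hpb
            rw [mem_ball] at hpa hpb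
            have h1 : dist a b ≤ dist p a + dist p b := by
              calc dist a b ≤ dist a p + dist p b := dist_triangle a p b
                _ = dist p a + dist p b := by rw [dist_comm a p]
            have hn1 : (0 : ℝ) < (n : ℝ) + 1 := by positivity
            have h2 : 1 / ((n : ℝ) + 1) < 1 / ((n : ℝ) + 1) := by
              calc 1 / ((n : ℝ) + 1) ≤ dist a b := hsep
                _ ≤ dist p a + dist p b := h1
                _ < 1 / (3 * ((n : ℝ) + 1)) + 1 / (3 * ((n : ℝ) + 1)) := add_lt_add hpa hpb
                _ < 1 / ((n : ℝ) + 1) := by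
                    rw [← add_div, div_lt_div_iff₀ (by positivity) hn1]
                    nlinarith
            exact lt_irrefl _ h2
          exact Disjoint.mono (hG1 n a) (hG1 n b) hballs
        · exact Disjoint.mono_left (hG1 n a) (hBdisj n a ha m h b hb)
      set g : (Σ n : ULift.{u} ℕ, ↥(B n.down)) → Set X := fun p => G p.1.down p.2.1 with hg
      have hginj : Function.Injective g := by
        rintro ⟨n, a, haB⟩ ⟨m, b, hbB⟩ hgab
        by_contra hne2
        have hcond : n.down ≠ m.down ∨ a ≠ b := by
          by_cases hnm : n = m
          · subst hnm
            right
            intro hab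
            subst hab
            exact hne2 rfl
          · exact Or.inl fun h => hnm (ULift.down_injective h)
        have hd := key n.down m.down a haB b hbB hcond
        rw [show G n.down a = g ⟨n, a, haB⟩ from rfl, hgab] at hd
        exact Set.disjoint_left.mp hd (hG2 m.down b) (hG2 m.down b)
      have hPD : (Set.range g).PairwiseDisjoint id := by
        rintro K ⟨⟨n, a, haB⟩, rfl⟩ K' ⟨⟨m, b, hbB⟩, rfl⟩ hKK'
        have hcond : n.down ≠ m.down ∨ a ≠ b := by
          by_cases hnm : n = m
          · subst hnm
            right
            intro hab
            subst hab
            exact hKK' rfl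
          · exact Or.inl fun h => hnm (ULift.down_injective h)
        exact key n.down m.down a haB b hbB hcond
      -- upper bound on the size of the packing
      have hQle : #(Set.range g) ≤ #X := by
        have hpt : ∀ S : Set.range g, ∃ x : X, x ∈ (S : Set X) := by
          rintro ⟨S, ⟨p, rfl⟩⟩
          exact ⟨_, hG2 p.1.down p.2.1⟩
        choose pt hptmem using hpt
        have hptinj : Function.Injective pt := by
          intro S T hST
          by_contra hne3
          have hvne : (S : Set X) ≠ (T : Set X) := fun h => hne3 (Subtype.ext h)
          have hd : Disjoint (S : Set X) (T : Set X) := hPD S.2 T.2 hvne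
          exact Set.disjoint_left.mp hd (hptmem S) (hST ▸ hptmem T)
        exact Cardinal.mk_le_of_injective hptinj
      -- lower bound: the total number of chosen sets is at least |X|
      set σ := Cardinal.sum (fun n : ULift.{u} ℕ => #(B n.down)) with hσ
      have hισ : #(Σ n : ULift.{u} ℕ, ↥(B n.down)) = σ := Cardinal.mk_sigma _
      set U : Set X := ⋃ p : (Σ n : ULift.{u} ℕ, ↥(B n.down)), g p with hU
      have hUbound : #U ≤ σ * Cardinal.continuum := by
        calc #U ≤ Cardinal.sum (fun p : (Σ n : ULift.{u} ℕ, ↥(B n.down)) => #(g p)) :=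
              Cardinal.mk_iUnion_le_sum_mk
          _ ≤ Cardinal.sum (fun _ : (Σ n : ULift.{u} ℕ, ↥(B n.down)) => Cardinal.continuum) :=
              Cardinal.sum_le_sum _ _ fun p =>
                (StmtAux.mk_eq_continuum_of_homeo (hG3 p.1.down p.2.1)).le
          _ = #(Σ n : ULift.{u} ℕ, ↥(B n.down)) * Cardinal.continuum := Cardinal.sum_const' _ _
          _ = σ * Cardinal.continuum := by rw [hισ]
      have hAB : ∀ n : ℕ, #(A n) ≤ #(B n) + #U := by
        intro n
        have hsplit : A n ⊆ B n ∪ (A n \ B n) := by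
          intro a ha
          by_cases h : a ∈ B n
          · exact Or.inl h
          · exact Or.inr ⟨ha, h⟩
        have hwit : ∀ a : ↥(A n \ B n), ∃ p : X,
            p ∈ ball (a : X) (1 / (3 * ((n : ℝ) + 1))) ∧ p ∈ U := by
          rintro ⟨a, haA, haB⟩
          have hnot : ¬ ∀ m, m < n → ∀ b ∈ B m,
              Disjoint (ball a (1 / (3 * ((n : ℝ) + 1)))) (G m b) := by
            intro hall
            exact haB (StmtAux.mem_Bfam.mpr ⟨haA, hall⟩)
          push_neg at hnot
          obtain ⟨m, hmn, b, hbB, hndj⟩ := hnot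
          rw [Set.not_disjoint_iff] at hndj
          obtain ⟨p, hp1, hp2⟩ := hndj
          exact ⟨p, hp1, Set.mem_iUnion.mpr ⟨⟨⟨m⟩, ⟨b, hbB⟩⟩, hp2⟩⟩
        choose w hw1 hw2 using hwit
        have hwinj : Function.Injective (fun a : ↥(A n \ B n) => (⟨w a, hw2 a⟩ : U)) := by
          intro a a' haa'
          have hww : w a = w a' := Subtype.ext_iff.mp haa'
          apply Subtype.ext
          by_contra hne4
          have hsep : 1 / ((n : ℝ) + 1) ≤ dist (a : X) (a' : X) :=
            hA1 n _ a.2.1 _ a'.2.1 hne4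
          have hpa := hw1 a
          have hpa' := hw1 a'
          rw [mem_ball] at hpa hpa'
          rw [hww] at hpa
          have h1 : dist (a : X) (a' : X) ≤ dist (w a') (a : X) + dist (w a') (a' : X) := by
            calc dist (a : X) (a' : X) ≤ dist (a : X) (w a') + dist (w a') (a' : X) :=
                  dist_triangle _ _ _
              _ = dist (w a') (a : X) + dist (w a') (a' : X) := by rw [dist_comm (a : X)]
          have hn1 : (0 : ℝ) < (n : ℝ) + 1 := by positivity
          have h2 : 1 / ((n : ℝ) + 1) < 1 / ((n : ℝ) + 1) := by
            calc 1 / ((n : ℝ) + 1) ≤ dist (a : X) (a' : X) := hsep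
              _ ≤ dist (w a') (a : X) + dist (w a') (a' : X) := h1
              _ < 1 / (3 * ((n : ℝ) + 1)) + 1 / (3 * ((n : ℝ) + 1)) := add_lt_add hpa hpa'
              _ < 1 / ((n : ℝ) + 1) := by
                  rw [← add_div, div_lt_div_iff₀ (by positivity) hn1]
                  nlinarith
          exact lt_irrefl _ h2
        calc #(A n) ≤ #(B n ∪ (A n \ B n) : Set X) := Cardinal.mk_le_mk_of_subset hsplit
          _ ≤ #(B n) + #(A n \ B n : Set X) := Cardinal.mk_union_le _ _
          _ ≤ #(B n) + #U := by
              gcongr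
              exact Cardinal.mk_le_of_injective hwinj
      have hκσbig : #X ≤ σ + ℵ₀ * (σ * Cardinal.continuum) := by
        calc #X ≤ #D := hκD
          _ ≤ Cardinal.sum (fun n : ULift.{u} ℕ => #(A n.down)) := Cardinal.mk_iUnion_le_sum_mk
          _ ≤ Cardinal.sum (fun n : ULift.{u} ℕ => #(B n.down) + #U) :=
              Cardinal.sum_le_sum _ _ fun n => hAB n.down
          _ = σ + Cardinal.sum (fun _ : ULift.{u} ℕ => #U) := by
              rw [show (fun n : ULift.{u} ℕ => #(B n.down) + #U) =
                (fun n : ULift.{u} ℕ => #(B n.down)) + (fun _ : ULift.{u} ℕ => #U) from rfl,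
                Cardinal.sum_add_distrib]
          _ = σ + ℵ₀ * #U := by
              rw [Cardinal.sum_const', Cardinal.mk_uLift, Cardinal.mk_nat, Cardinal.lift_aleph0]
          _ ≤ σ + ℵ₀ * (σ * Cardinal.continuum) := by gcongr
      have hκσ : #X ≤ σ := by
        by_contra hσκ
        push_neg at hσκ
        have hℵ : ℵ₀ ≤ #X := Cardinal.aleph0_le_continuum.trans hgt.le
        have hbig : σ + ℵ₀ * (σ * Cardinal.continuum) < #X :=
          Cardinal.add_lt_of_lt hℵ hσκ
            (Cardinal.mul_lt_of_lt hℵ (Cardinal.aleph0_le_continuum.trans_lt hgt)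
              (Cardinal.mul_lt_of_lt hℵ hσκ hgt))
        exact absurd hκσbig (not_le.mpr hbig)
      refine ⟨Set.range g, ⟨?_, hPD⟩, ?_⟩
      · rintro K ⟨p, rfl⟩
        exact hG3 p.1.down p.2.1
      · refine le_antisymm hQle ?_
        rw [Cardinal.mk_range_eq g hginj, hισ]
        exact hκσ
end

section
/- Let F₀, F₁, F₂, … be totally ordered sets, each carrying the discrete topology, and give the product ∏_{n∈ω} Fₙ the product topology. For f, g ∈ ∏_{n∈ω} Fₙ write f <* g to mean f(n) < g(n) for all but finitely many n. Then no subset of ∏_{n∈ω} Fₙ can be both homeomorphic to the Cantor space 2^ω and well ordered by <*. -/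
open Cardinal Set TopologicalSpace

/-- Cantor space has no isolated points: any open set containing a point contains another. -/
lemma cantor_two {V : Set CantorSpace} (hV : IsOpen V) {f : CantorSpace} (hf : f ∈ V) :
    ∃ g ∈ V, g ≠ f := by
  obtain ⟨I, u, hu, hsub⟩ := isOpen_pi_iff.1 hV f hf
  obtain ⟨m, hm⟩ := Infinite.exists_notMem_finset I
  refine ⟨Function.update f m (!f m), hsub ?_, ?_⟩
  · intro a ha
    rw [Function.update_of_ne (by rintro rfl; exact hm ha)]
    exact (hu a ha).2
  · intro h
    have := congrFun h m
    simp [Function.update_self] at this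

theorem stmt_10 (F : ℕ → Type*) [∀ n, LinearOrder (F n)]
    [∀ n, TopologicalSpace (F n)] [∀ n, DiscreteTopology (F n)]
    (C : Set (∀ n, F n)) :
    ¬ (Nonempty (C ≃ₜ CantorSpace) ∧
        IsWellOrder C (fun f g : C => ∀ᶠ n in Filter.atTop, f.1 n < g.1 n)) := by
  rintro ⟨⟨e⟩, hwo⟩
  haveI := hwo
  set r : C → C → Prop := fun f g : C => ∀ᶠ n in Filter.atTop, f.1 n < g.1 n with hr
  haveI : CompactSpace C := e.symm.compactSpace
  -- no isolated points in C
  have htwo : ∀ U : Set C, IsOpen U → ∀ x ∈ U, ∃ y ∈ U, y ≠ x := by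
    intro U hU x hx
    have hV : IsOpen (e.symm ⁻¹' U) := hU.preimage e.symm.continuous
    have hxV : e x ∈ e.symm ⁻¹' U := by simpa using hx
    obtain ⟨g, hg, hne⟩ := cantor_two hV hxV
    refine ⟨e.symm g, hg, fun h => hne ?_⟩
    have : g = e (e.symm g) := (e.apply_symm_apply g).symm
    rw [this, h]
  -- the closed pieces of the order relation
  set D : ℕ → Set (C × C) := fun N => {p | ∀ n, N ≤ n → (p.1 : ∀ k, F k) n < (p.2 : ∀ k, F k) n}
    with hDdef
  have hDcl : ∀ N, IsClosed (D N) := by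
    intro N
    have heq : D N = ⋂ n, ⋂ (_ : N ≤ n),
        (fun p : C × C => ((p.1 : ∀ k, F k) n, (p.2 : ∀ k, F k) n)) ⁻¹'
          {q : F n × F n | q.1 < q.2} := by
      ext p; simp [hDdef]
    rw [heq]
    refine isClosed_iInter fun n => isClosed_iInter fun _ => ?_
    have hc : Continuous fun p : C × C => ((p.1 : ∀ k, F k) n, (p.2 : ∀ k, F k) n) :=
      ((continuous_apply n).comp (continuous_subtype_val.comp continuous_fst)).prodMk
        ((continuous_apply n).comp (continuous_subtype_val.comp continuous_snd))
    exact (isClosed_discrete _).preimage hc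
  have hrD : ∀ f g : C, r f g ↔ ∃ N, (f, g) ∈ D N := by
    intro f g
    rw [hr]
    simp only [Filter.eventually_atTop]
    exact ⟨fun ⟨N, h⟩ => ⟨N, fun n hn => h n hn⟩, fun ⟨N, h⟩ => ⟨N, fun n hn => h n hn⟩⟩
  -- Key claim via Baire category
  have key : ∀ W : Set C, IsOpen W → W.Nonempty →
      ∃ g ∈ W, ∃ W' ⊆ W, IsOpen W' ∧ W'.Nonempty ∧ ∀ x ∈ W', r x g := by
    intro W hWo hWne
    set K : Set (C × C) := closure ((W ×ˢ W)ᶜ) with hK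
    set G : Option (ℕ × Bool) → Set (C × C) := fun i =>
      Option.elim i (Set.diagonal C ∪ K)
        (fun q => (if q.2 then D q.1 else Prod.swap ⁻¹' D q.1) ∪ K) with hG
    have hGcl : ∀ i, IsClosed (G i) := by
      rintro (_ | ⟨N, b⟩)
      · exact isClosed_diagonal.union isClosed_closure
      · cases b
        · simpa [hG] using ((hDcl N).preimage continuous_swap).union isClosed_closure
        · simpa [hG] using (hDcl N).union isClosed_closure
    have hGU : ⋃ i, G i = Set.univ := by
      ext p
      simp only [mem_iUnion, mem_univ, iff_true]
      by_cases hp : p ∈ (W ×ˢ W : Set (C × C))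
      · rcases trichotomous_of r p.1 p.2 with h | h | h
        · obtain ⟨N, hN⟩ := (hrD p.1 p.2).1 h
          exact ⟨some (N, true), Or.inl (by simpa [hG] using hN)⟩
        · exact ⟨none, Or.inl h⟩
        · obtain ⟨N, hN⟩ := (hrD p.2 p.1).1 h
          exact ⟨some (N, false), Or.inl (by simpa [hG, Prod.swap] using hN)⟩
      · exact ⟨none, Or.inr (subset_closure hp)⟩
    have hdense := dense_iUnion_interior_of_closed hGcl hGU
    obtain ⟨p, hpI, hpW⟩ := hdense.exists_mem_open (hWo.prod hWo) (hWne.prod hWne)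
    obtain ⟨i, hpi⟩ := mem_iUnion.1 hpI
    set O : Set (C × C) := (W ×ˢ W) ∩ interior (G i) with hO
    have hOopen : IsOpen O := (hWo.prod hWo).inter isOpen_interior
    have hpO : p ∈ O := ⟨hpW, hpi⟩
    have hOK : ∀ q ∈ O, q ∉ K := by
      intro q hq hqK
      obtain ⟨y, hy1, hy2⟩ := mem_closure_iff.1 hqK _ (hWo.prod hWo) hq.1
      exact hy2 hy1
    have hOG : ∀ q ∈ O, q ∈ G i := fun q hq => interior_subset hq.2
    obtain ⟨u, v, hu, hv, hp1, hp2, huv⟩ := isOpen_prod_iff.1 hOopen p.1 p.2 hpO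
    have hbox : ∀ a ∈ u, ∀ b ∈ v, (a, b) ∈ G i ∧ (a, b) ∉ K ∧ (a, b) ∈ (W ×ˢ W : Set (C × C)) :=
      fun a ha b hb => ⟨hOG _ (huv ⟨ha, hb⟩), hOK _ (huv ⟨ha, hb⟩), (huv ⟨ha, hb⟩).1⟩
    match i with
    | none =>
      exfalso
      obtain ⟨y, hy, hyne⟩ := htwo u hu p.1 hp1
      have h1 : (y, p.2) ∈ Set.diagonal C := by
        rcases (hbox y hy p.2 hp2).1 with h | h
        · exact h
        · exact absurd h (hbox y hy p.2 hp2).2.1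
      have h2 : (p.1, p.2) ∈ Set.diagonal C := by
        rcases (hbox p.1 hp1 p.2 hp2).1 with h | h
        · exact h
        · exact absurd h (hbox p.1 hp1 p.2 hp2).2.1
      exact hyne (h1.trans h2.symm)
    | some (N, true) =>
      refine ⟨p.2, (hbox p.1 hp1 p.2 hp2).2.2.2, u, ?_, hu, ⟨p.1, hp1⟩, ?_⟩
      · intro x hx; exact (hbox x hx p.2 hp2).2.2.1
      · intro x hx
        have hD' : (x, p.2) ∈ D N := by
          rcases (hbox x hx p.2 hp2).1 with h | h
          · simpa using h
          · exact absurd h (hbox x hx p.2 hp2).2.1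
        exact (hrD x p.2).2 ⟨N, hD'⟩
    | some (N, false) =>
      refine ⟨p.1, (hbox p.1 hp1 p.2 hp2).2.2.1, v, ?_, hv, ⟨p.2, hp2⟩, ?_⟩
      · intro x hx; exact (hbox p.1 hp1 x hx).2.2.2
      · intro x hx
        have hD' : (x, p.1) ∈ D N := by
          rcases (hbox p.1 hp1 x hx).1 with h | h
          · simpa using h
          · exact absurd h (hbox p.1 hp1 x hx).2.1
        exact (hrD x p.1).2 ⟨N, hD'⟩
  -- build a descending sequence
  have hCne : Nonempty C := ⟨e.symm (fun _ => false)⟩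
  obtain ⟨x0⟩ := hCne
  obtain ⟨g0, _, W1, _, hW1o, hW1ne, hW1lt⟩ := key Set.univ isOpen_univ ⟨x0, trivial⟩
  set T := {q : Set C × C // IsOpen q.1 ∧ q.1.Nonempty ∧ ∀ x ∈ q.1, r x q.2} with hT
  have step : ∀ t : T, ∃ t' : T, r t'.1.2 t.1.2 := by
    rintro ⟨⟨W, g⟩, hWo, hWne, hWlt⟩
    obtain ⟨g', hg', W', hsub, hW'o, hW'ne, hW'lt⟩ := key W hWo hWne
    exact ⟨⟨(W', g'), hW'o, hW'ne, hW'lt⟩, hWlt g' hg'⟩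
  choose st hst using step
  set t0 : T := ⟨(W1, g0), hW1o, hW1ne, hW1lt⟩ with ht0
  set seq : ℕ → T := fun n => st^[n] t0 with hseq
  have hdesc : ∀ n, r (seq (n + 1)).1.2 (seq n).1.2 := by
    intro n
    have : seq (n + 1) = st (seq n) := Function.iterate_succ_apply' st n t0
    rw [this]
    exact hst (seq n)
  have hwf : WellFounded r := IsWellFounded.wf
  obtain ⟨m, hm, hmin⟩ := hwf.has_min (Set.range fun n => (seq n).1.2) ⟨_, ⟨0, rfl⟩⟩
  obtain ⟨k, rfl⟩ := hm
  exact hmin _ ⟨k + 1, rfl⟩ (hdesc k)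
end

section
/- Suppose D is a nonempty discrete topological space whose cardinality |D| is infinite with countable cofinality. Then the metrizable space D^ω (the countable product of D with the product topology) has a subspace Y with |Y| = |D|⁺ such that Y contains no subspace homeomorphic to the Cantor space 2^ω. -/
open Cardinal Set TopologicalSpace

universe u

namespace Stmt11

open Ordinal


noncomputable def tpin {o : Ordinal.{u}} (t : o.ToType) : Ordinal.{u} :=
  @Ordinal.typein o.ToType (· < ·) isWellOrder_lt t

lemma tpin_lt_self {o : Ordinal.{u}} (t : o.ToType) : tpin t < o :=
  Ordinal.typein_lt_self t

lemma tpin_lt_tpin {o : Ordinal.{u}} {a b : o.ToType} : tpin a < tpin b ↔ a < b :=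
  @Ordinal.typein_lt_typein o.ToType (· < ·) isWellOrder_lt a b

lemma tpin_inj {o : Ordinal.{u}} {a b : o.ToType} (h : tpin a = tpin b) : a = b :=
  (@Ordinal.typein_inj o.ToType (· < ·) isWellOrder_lt a b).mp h

lemma card_tpin {o : Ordinal.{u}} (x : o.ToType) :
    (tpin x).card = #{y : o.ToType // y < x} :=
  @Ordinal.card_typein o.ToType (· < ·) isWellOrder_lt x

noncomputable def enm {o : Ordinal.{u}} (x : Ordinal.{u}) (h : x < o) : o.ToType :=
  (@Ordinal.enum o.ToType (· < ·) isWellOrder_lt) ⟨x, by rw [Ordinal.type_toType]; exact h⟩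

lemma tpin_enm {o : Ordinal.{u}} (x : Ordinal.{u}) (h : x < o) : tpin (enm x h) = x :=
  @Ordinal.typein_enum o.ToType (· < ·) isWellOrder_lt _ _

/-- the eventually-strictly-dominating family -/
theorem exists_evStrict_family {κ : Cardinal.{u}} (hinf : ℵ₀ ≤ κ) (hcof : κ.ord.cof = ℵ₀) :
    ∃ F : (Order.succ κ).ord.ToType → ℕ → Ordinal.{u},
      (∀ α n, F α n < κ.ord) ∧
      ∀ β α : (Order.succ κ).ord.ToType, β < α → ∃ m : ℕ, ∀ n, m ≤ n → F β n < F α n := by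
  classical
  -- the cofinal sequence in κ.ord.ToType
  have hTne : Nonempty κ.ord.ToType := by
    rw [Ordinal.nonempty_toType_iff]
    intro h0
    rw [h0] at hcof
    simp [Ordinal.cof_zero] at hcof
    exact absurd hcof.symm aleph0_ne_zero
  obtain ⟨Scof, hSunb, hScard⟩ := Order.exists_cof_eq κ.ord.ToType
  rw [Ordinal.cof_toType, hcof] at hScard
  have hScount : Countable Scof := by
    rw [← Cardinal.mk_le_aleph0_iff]
    exact le_of_eq hScard
  have hSne : Nonempty Scof := by
    rw [← Cardinal.mk_ne_zero_iff, hScard]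
    exact aleph0_ne_zero
  obtain ⟨g, hg⟩ := exists_surjective_nat Scof
  set seq0 : ℕ → κ.ord.ToType := fun n => (g n).1 with hseq0
  have hlimκ : Order.IsSuccLimit κ.ord := Cardinal.isSuccLimit_ord hinf
  have hcov0 : ∀ t : κ.ord.ToType, ∃ n, t < seq0 n := by
    intro t
    have h1 : tpin t + 1 < κ.ord := by
      rw [Ordinal.add_one_eq_succ]
      exact hlimκ.succ_lt (tpin_lt_self t)
    set t' : κ.ord.ToType := enm (tpin t + 1) h1 with ht'
    have htt' : t < t' := by
      rw [← tpin_lt_tpin, tpin_enm, Ordinal.add_one_eq_succ]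
      exact Order.lt_succ _
    obtain ⟨s, hs, hns⟩ := hSunb t'
    obtain ⟨n, hn⟩ := hg ⟨s, hs⟩
    refine ⟨n, lt_of_lt_of_le htt' ?_⟩
    have : seq0 n = s := by rw [hseq0]; simp [hn]
    rw [this]
    exact hns
  set seq : ℕ → κ.ord.ToType := fun n =>
    Nat.rec (seq0 0) (fun k ih => max ih (seq0 (k + 1))) n with hseq
  have hseqmono : Monotone seq := by
    apply monotone_nat_of_le_succ
    intro n
    exact le_max_left _ _
  have hseq0le : ∀ n, seq0 n ≤ seq n := by
    intro n
    cases n with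
    | zero => exact le_refl _
    | succ k => exact le_max_right _ _
  have hcov : ∀ t : κ.ord.ToType, ∃ n, t < seq n := by
    intro t
    obtain ⟨n, hn⟩ := hcov0 t
    exact ⟨n, lt_of_lt_of_le hn (hseq0le n)⟩
  -- the cardinal scales
  set lam : ℕ → Cardinal.{u} := fun n => (tpin (seq n)).card with hlamdef
  have hlam : ∀ n, lam n < κ := by
    intro n
    exact Cardinal.lt_ord.mp (tpin_lt_self _)
  set kap : ℕ → Cardinal.{u} := fun n =>
    Nat.rec ℵ₀ (fun k _ => if ℵ₀ < κ then Order.succ (lam k ⊔ ℵ₀) else ℵ₀) n with hkap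
  have hkapsucc : ∀ k, kap (k + 1) = if ℵ₀ < κ then Order.succ (lam k ⊔ ℵ₀) else ℵ₀ := by
    intro k; rfl
  have hkapreg : ∀ n, (kap n).IsRegular := by
    intro n
    cases n with
    | zero => exact isRegular_aleph0
    | succ k =>
      rw [hkapsucc]
      split
      · exact isRegular_succ le_sup_right
      · exact isRegular_aleph0
  have hkapκ : ∀ n, kap n ≤ κ := by
    intro n
    cases n with
    | zero => exact hinf
    | succ k =>
      rw [hkapsucc]
      split
      · next hh => exact Order.succ_le_of_lt (sup_lt_iff.mpr ⟨hlam k, hh⟩)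
      · next hh => exact hinf
  have hlamkap : ∀ k, lam k < (kap (k + 1)).ord.cof := by
    intro k
    rw [(hkapreg (k + 1)).cof_ord, hkapsucc]
    split
    · exact lt_of_le_of_lt le_sup_left (Order.lt_succ _)
    · next hh =>
      have hκeq : κ = ℵ₀ := le_antisymm (not_lt.mp hh) hinf
      rw [← hκeq]
      exact hlam k
  -- the extension lemma
  have EXT : ∀ (ι : Type u) (G : ι → ℕ → Ordinal.{u}), #ι ≤ κ →
      (∀ i n, G i n < (kap n).ord) →
      ∃ h : ℕ → Ordinal.{u}, (∀ n, h n < (kap n).ord) ∧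
        ∀ i, ∃ m : ℕ, ∀ n, m ≤ n → G i n < h n := by
    intro ι G hι hG
    obtain ⟨e⟩ : Nonempty (ι ↪ κ.ord.ToType) := by
      rw [← Cardinal.le_def, mk_toType, card_ord]
      exact hι
    set h : ℕ → Ordinal.{u} := fun n =>
      Nat.casesOn n 0 (fun k => ⨆ i : {i : ι // e i < seq k}, (G i.1 (k + 1) + 1)) with hh
    refine ⟨h, ?_, ?_⟩
    · intro n
      cases n with
      | zero =>
        refine Cardinal.lt_ord.mpr ?_
        show (0 : Ordinal).card < ℵ₀
        rw [Ordinal.card_zero]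
        exact aleph0_pos
      | succ k =>
        apply Ordinal.iSup_lt_of_lt_cof
        · refine lt_of_le_of_lt ?_ (hlamkap k)
          have h1 : lam k = #{t : κ.ord.ToType // t < seq k} := card_tpin _
          rw [h1]
          exact Cardinal.mk_le_of_injective (f := fun i : {i : ι // e i < seq k} =>
            (⟨e i.1, i.2⟩ : {t : κ.ord.ToType // t < seq k}))
            (fun a b hab => Subtype.ext (e.injective (congrArg Subtype.val hab)))
        · intro i
          rw [Ordinal.add_one_eq_succ]
          exact (Cardinal.isSuccLimit_ord (hkapreg (k + 1)).aleph0_le).succ_lt (hG _ _)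
    · intro i
      obtain ⟨n₀, hn₀⟩ := hcov (e i)
      refine ⟨n₀ + 1, ?_⟩
      intro n hn
      obtain ⟨k, rfl⟩ : ∃ k, n = k + 1 := ⟨n - 1, by omega⟩
      have hik : e i < seq k := lt_of_lt_of_le hn₀ (hseqmono (by omega))
      have hle : G i (k + 1) + 1 ≤ h (k + 1) :=
        Ordinal.le_iSup (fun i : {i : ι // e i < seq k} => (G i.1 (k + 1) + 1)) ⟨i, hik⟩
      refine lt_of_lt_of_le ?_ hle
      rw [Ordinal.add_one_eq_succ]
      exact Order.lt_succ _
  -- transfinite recursion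
  have hcardIio : ∀ α : (Order.succ κ).ord.ToType, #{β // β < α} ≤ κ := by
    intro α
    have h1 : #{β // β < α} = (tpin α).card := (card_tpin α).symm
    rw [h1]
    exact Order.lt_succ_iff.mp (Cardinal.lt_ord.mp (tpin_lt_self α))
  set Vst := {f : ℕ → Ordinal.{u} // ∀ n, f n < (kap n).ord} with hVst
  set hV : ∀ α : (Order.succ κ).ord.ToType,
      (∀ β : (Order.succ κ).ord.ToType, β < α → Vst) → Vst := fun α prev =>
    ⟨(EXT {β // β < α} (fun b => (prev b.1 b.2).1) (hcardIio α)
        (fun i n => (prev i.1 i.2).2 n)).choose,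
      (EXT {β // β < α} (fun b => (prev b.1 b.2).1) (hcardIio α)
        (fun i n => (prev i.1 i.2).2 n)).choose_spec.1⟩ with hhV
  set Ffix : (Order.succ κ).ord.ToType → Vst := WellFoundedLT.fix hV with hFfix
  have hFeq : ∀ α, Ffix α = hV α (fun β _ => Ffix β) := WellFoundedLT.fix_eq hV
  refine ⟨fun α => (Ffix α).1, ?_, ?_⟩
  · intro α n
    exact lt_of_lt_of_le ((Ffix α).2 n) (Cardinal.ord_le_ord.mpr (hkapκ n))
  · intro β α hβα
    have h2 := (EXT {β' // β' < α} (fun b => (Ffix b.1).1) (hcardIio α)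
        (fun i n => (Ffix i.1).2 n)).choose_spec.2 ⟨β, hβα⟩
    have h3 : (Ffix α).1 = (EXT {β' // β' < α} (fun b => (Ffix b.1).1) (hcardIio α)
        (fun i n => (Ffix i.1).2 n)).choose := by
      rw [hFeq α]
    obtain ⟨m, hm⟩ := h2
    refine ⟨m, fun n hn => ?_⟩
    have hx := hm n hn
    rw [← congrFun h3 n] at hx
    exact hx





def cyl (x : CantorSpace) (N : ℕ) : Set CantorSpace := {y | ∀ k < N, y k = x k}

lemma isClopen_cyl (x : CantorSpace) (N : ℕ) : IsClopen (cyl x N) := by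
  have h : cyl x N = ⋂ k ∈ Finset.range N, {y : CantorSpace | y k = x k} := by
    ext y; simp [cyl]
  rw [h]
  apply isClopen_biInter_finset
  intro k _
  exact (isClopen_discrete {x k}).preimage (continuous_apply k)

lemma self_mem_cyl (x : CantorSpace) (N : ℕ) : x ∈ cyl x N := fun _ _ => rfl

lemma exists_cyl_subset {x : CantorSpace} {U : Set CantorSpace} (hU : IsOpen U) (hx : x ∈ U) :
    ∃ N, cyl x N ⊆ U := by
  obtain ⟨I, u, hu, hsub⟩ := isOpen_pi_iff.mp hU x hx
  refine ⟨(I.sup id) + 1, fun y hy => hsub ?_⟩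
  intro k hk
  have hky : y k = x k := hy k (by
    have : k ≤ I.sup id := Finset.le_sup (f := id) hk
    omega)
  rw [hky]; exact (hu k hk).2

lemma exists_ne_mem_cyl (x : CantorSpace) (N : ℕ) : ∃ y, y ∈ cyl x N ∧ y ≠ x := by
  refine ⟨Function.update x N (!x N), ?_, ?_⟩
  · intro k hk
    exact Function.update_of_ne (by omega) _ _
  · intro h
    have h2 := congrFun h N
    rw [Function.update_self] at h2
    simp at h2

theorem no_wellordered_cantor {w : ℕ → CantorSpace → Ordinal.{u}}
    {idx : CantorSpace → Ordinal.{u}}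
    (hw : ∀ (n : ℕ) (x : CantorSpace), IsOpen {y : CantorSpace | w n y = w n x})
    (hinj : ∀ x y, idx x = idx y → x = y)
    (hcmp : ∀ x y, idx x < idx y → ∃ m, ∀ n, m ≤ n → w n x < w n y) : False := by
  classical
  set Rel : ℕ → CantorSpace → CantorSpace → Prop :=
    fun m x y => ∀ n, m ≤ n → w n x < w n y with hRel
  have hQopen : ∀ (n : ℕ) (Q : Ordinal.{u} → Ordinal.{u} → Prop),
      IsOpen {p : CantorSpace × CantorSpace | Q (w n p.1) (w n p.2)} := by
    intro n Q
    rw [isOpen_iff_forall_mem_open]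
    intro p hp
    refine ⟨{y | w n y = w n p.1} ×ˢ {y | w n y = w n p.2}, ?_, (hw n p.1).prod (hw n p.2),
      ⟨rfl, rfl⟩⟩
    rintro ⟨a, b⟩ ⟨ha, hb⟩
    simp only [mem_setOf_eq] at ha hb ⊢
    rw [ha, hb]; exact hp
  have hRelClosed : ∀ m, IsClosed {p : CantorSpace × CantorSpace | Rel m p.1 p.2} := by
    intro m
    have h : {p : CantorSpace × CantorSpace | Rel m p.1 p.2} =
        ⋂ n, {p : CantorSpace × CantorSpace | m ≤ n → w n p.1 < w n p.2} := by
      ext p; simp [hRel]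
    rw [h]
    refine isClosed_iInter fun n => ?_
    rw [← isOpen_compl_iff]
    exact hQopen n (fun a b => ¬ (m ≤ n → a < b))
  have hRelClosed' : ∀ m, IsClosed {p : CantorSpace × CantorSpace | Rel m p.2 p.1} := by
    intro m
    have h : {p : CantorSpace × CantorSpace | Rel m p.2 p.1} =
        Prod.swap ⁻¹' {p : CantorSpace × CantorSpace | Rel m p.1 p.2} := rfl
    rw [h]
    exact (hRelClosed m).preimage continuous_swap
  set Fam : Option (ℕ × Bool) → Set (CantorSpace × CantorSpace) := fun i =>
    match i with
    | none => {p | p.1 = p.2}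
    | some (m, true) => {p | Rel m p.1 p.2}
    | some (m, false) => {p | Rel m p.2 p.1} with hFam
  have hFamClosed : ∀ i, IsClosed (Fam i) := by
    rintro (_ | ⟨m, b⟩)
    · exact isClosed_diagonal
    · cases b
      · exact hRelClosed' m
      · exact hRelClosed m
  have hFamCover : ⋃ i, Fam i = Set.univ := by
    apply Set.eq_univ_of_forall
    rintro ⟨x, y⟩
    rcases eq_or_ne x y with h | h
    · exact Set.mem_iUnion.mpr ⟨none, h⟩
    · have hne : idx x ≠ idx y := fun hh => h (hinj _ _ hh)
      rcases hne.lt_or_gt with hlt | hlt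
      · obtain ⟨m, hm⟩ := hcmp _ _ hlt
        exact Set.mem_iUnion.mpr ⟨some (m, true), hm⟩
      · obtain ⟨m, hm⟩ := hcmp _ _ hlt
        exact Set.mem_iUnion.mpr ⟨some (m, false), hm⟩
  have hdense : Dense (⋃ i, interior (Fam i)) :=
    dense_iUnion_interior_of_closed hFamClosed hFamCover
  have STEP : ∀ P : Set CantorSpace, IsClopen P → P.Nonempty →
      ∃ (A : Set CantorSpace) (b : CantorSpace) (m : ℕ), IsClopen A ∧ A.Nonempty ∧ A ⊆ P ∧
        b ∈ P ∧ ∀ x ∈ A, x ≠ b ∧ Rel m x b := by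
    intro P hP hPne
    set O : Set (CantorSpace × CantorSpace) := (P ×ˢ P) \ {p | p.1 = p.2} with hO
    have hOopen : IsOpen O := (hP.isOpen.prod hP.isOpen).sdiff isClosed_diagonal
    have hOne : O.Nonempty := by
      obtain ⟨a, ha⟩ := hPne
      obtain ⟨N, hN⟩ := exists_cyl_subset hP.isOpen ha
      obtain ⟨y, hy, hyne⟩ := exists_ne_mem_cyl a N
      exact ⟨(y, a), ⟨⟨hN hy, ha⟩, hyne⟩⟩
    obtain ⟨p, hpd, hpO⟩ := hdense.exists_mem_open hOopen hOne
    obtain ⟨i, hpi⟩ := Set.mem_iUnion.mp hpd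
    have hpP : p.1 ∈ P ∧ p.2 ∈ P := hpO.1
    have hpne : p.1 ≠ p.2 := hpO.2
    match i with
    | none =>
      exact absurd (interior_subset hpi) hpne
    | some (m, or) =>
      set W : Set (CantorSpace × CantorSpace) := O ∩ interior (Fam (some (m, or))) with hW
      have hWopen : IsOpen W := hOopen.inter isOpen_interior
      have hpW : p ∈ W := ⟨hpO, hpi⟩
      obtain ⟨U, V, hUo, hVo, hU1, hV2, hUV⟩ := isOpen_prod_iff.mp hWopen p.1 p.2 hpW
      obtain ⟨N₁, hN₁⟩ := exists_cyl_subset hUo hU1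
      obtain ⟨N₂, hN₂⟩ := exists_cyl_subset hVo hV2
      have key : ∀ x y, x ∈ cyl p.1 N₁ → y ∈ cyl p.2 N₂ →
          (x, y) ∈ O ∧ (x, y) ∈ Fam (some (m, or)) := by
        intro x y hx hy
        have hxy : (x, y) ∈ W := hUV ⟨hN₁ hx, hN₂ hy⟩
        exact ⟨hxy.1, interior_subset hxy.2⟩
      cases or with
      | true =>
        refine ⟨P ∩ cyl p.1 N₁, p.2, m, hP.inter (isClopen_cyl _ _),
          ⟨p.1, hpP.1, self_mem_cyl _ _⟩, Set.inter_subset_left, hpP.2, ?_⟩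
        rintro x ⟨-, hx⟩
        obtain ⟨hxO, hxF⟩ := key x p.2 hx (self_mem_cyl _ _)
        exact ⟨hxO.2, hxF⟩
      | false =>
        refine ⟨P ∩ cyl p.2 N₂, p.1, m, hP.inter (isClopen_cyl _ _),
          ⟨p.2, hpP.2, self_mem_cyl _ _⟩, Set.inter_subset_left, hpP.1, ?_⟩
        rintro y ⟨-, hy⟩
        obtain ⟨hyO, hyF⟩ := key p.1 y (self_mem_cyl _ _) hy
        exact ⟨fun hh => hyO.2 hh.symm, hyF⟩
  have STEP' : ∀ P : {S : Set CantorSpace // IsClopen S ∧ S.Nonempty},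
      ∃ (A : {S : Set CantorSpace // IsClopen S ∧ S.Nonempty}) (b : CantorSpace) (m : ℕ),
        A.1 ⊆ P.1 ∧ b ∈ P.1 ∧ ∀ x ∈ A.1, x ≠ b ∧ Rel m x b := by
    intro P
    obtain ⟨A, b, m, h1, h2, h3, h4, h5⟩ := STEP P.1 P.2.1 P.2.2
    exact ⟨⟨A, h1, h2⟩, b, m, h3, h4, h5⟩
  choose Af bf mf hAsub hbmem hprop using STEP'
  have hCne : (Set.univ : Set CantorSpace).Nonempty := ⟨fun _ => false, trivial⟩
  set Pseq : ℕ → {S : Set CantorSpace // IsClopen S ∧ S.Nonempty} := fun i =>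
    Nat.rec ⟨Set.univ, isClopen_univ, hCne⟩ (fun _ ih => Af ih) i with hPseq
  set bseq : ℕ → CantorSpace := fun i => bf (Pseq i) with hbseq
  have hdec : ∀ i, idx (bseq (i + 1)) < idx (bseq i) := by
    intro i
    have hmem : bseq (i + 1) ∈ (Af (Pseq i)).1 := hbmem (Pseq (i + 1))
    obtain ⟨hne, hrel⟩ := hprop (Pseq i) _ hmem
    have hne' : idx (bseq (i + 1)) ≠ idx (bseq i) := fun hh => hne (hinj _ _ hh)
    rcases hne'.lt_or_gt with h | h
    · exact h
    · exfalso
      obtain ⟨m', hm'⟩ := hcmp _ _ h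
      have h1 := hrel (max m' (mf (Pseq i))) (le_max_right _ _)
      have h2 := hm' (max m' (mf (Pseq i))) (le_max_left _ _)
      exact absurd h1 (asymm h2)
  obtain ⟨o, ⟨i, hio⟩, hmin⟩ := Ordinal.lt_wf.has_min
    (Set.range fun i => idx (bseq i)) ⟨_, Set.mem_range_self 0⟩
  exact hmin _ ⟨i + 1, rfl⟩ (hio ▸ hdec i)


end Stmt11

theorem stmt_11 {D : Type u} [TopologicalSpace D] [DiscreteTopology D] [Nonempty D]
    (hinf : Cardinal.aleph0 ≤ Cardinal.mk D)
    (hcof : (Cardinal.mk D).ord.cof = Cardinal.aleph0) :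
    ∃ Y : Set (ℕ → D), Cardinal.mk Y = Order.succ (Cardinal.mk D) ∧
      ∀ K : Set (ℕ → D), K ⊆ Y → ¬ Nonempty (K ≃ₜ CantorSpace) := by
  classical
  set κ := Cardinal.mk D with hκ
  obtain ⟨F, hFlt, hFspec⟩ := Stmt11.exists_evStrict_family hinf hcof
  obtain ⟨eT⟩ : Nonempty (κ.ord.ToType ≃ D) := by
    rw [← Cardinal.eq, Cardinal.mk_toType, Cardinal.card_ord]
  set famD : (Order.succ κ).ord.ToType → ℕ → D := fun α n =>
    eT (Stmt11.enm (F α n) (hFlt α n)) with hfamD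
  set rD : D → Ordinal.{u} := fun d => Stmt11.tpin (eT.symm d) with hrD
  have key : ∀ α n, rD (famD α n) = F α n := by
    intro α n
    rw [hrD, hfamD]
    simp only [Equiv.symm_apply_apply]
    exact Stmt11.tpin_enm _ _
  have hfamInj : Function.Injective famD := by
    intro a b hab
    by_contra hne
    have hFab : F a = F b := by
      funext n
      rw [← key a n, ← key b n, hab]
    rcases Ne.lt_or_gt hne with h | h
    · obtain ⟨m, hm⟩ := hFspec a b h
      have := hm m le_rfl
      rw [hFab] at this
      exact lt_irrefl _ this
    · obtain ⟨m, hm⟩ := hFspec b a h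
      have := hm m le_rfl
      rw [hFab] at this
      exact lt_irrefl _ this
  refine ⟨Set.range famD, ?_, ?_⟩
  · rw [Cardinal.mk_range_eq famD hfamInj, Cardinal.mk_toType, Cardinal.card_ord]
  · intro K hKY hne
    obtain ⟨e⟩ := hne
    set Φ : CantorSpace → (ℕ → D) := fun x => (e.symm x : K) with hΦ
    have hΦc : Continuous Φ := continuous_subtype_val.comp e.symm.continuous
    have hΦinj : Function.Injective Φ := Subtype.val_injective.comp e.symm.injective
    have hΦY : ∀ x, Φ x ∈ Set.range famD := fun x => hKY (e.symm x).2
    choose A hA using hΦY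
    apply Stmt11.no_wellordered_cantor (w := fun n x => rD (Φ x n))
      (idx := fun x => Stmt11.tpin (A x))
    · intro n x
      have hc : Continuous (fun y => Φ y n) := (continuous_apply n).comp hΦc
      have h1 : {y : CantorSpace | rD (Φ y n) = rD (Φ x n)} =
          (fun y => Φ y n) ⁻¹' {d | rD d = rD (Φ x n)} := rfl
      rw [h1]
      exact (isOpen_discrete _).preimage hc
    · intro x y hxy
      have hAxy : A x = A y := Stmt11.tpin_inj hxy
      apply hΦinj
      rw [← hA x, ← hA y, hAxy]
    · intro x y hxy
      have hAxy : A x < A y := Stmt11.tpin_lt_tpin.mp hxy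
      obtain ⟨m, hm⟩ := hFspec (A x) (A y) hAxy
      refine ⟨m, fun n hn => ?_⟩
      have h1 : rD (Φ x n) = F (A x) n := by rw [← hA x]; exact key _ _
      have h2 : rD (Φ y n) = F (A y) n := by rw [← hA y]; exact key _ _
      rw [h1, h2]
      exact hm n hn
end
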